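/- arXiv:2306.13049 — 6 statements merged into one kernel-verified Lean document; each statement's English description precedes it below -/
import Mathlib

section
/- For every Σ₁ arithmetic formula φ(x⃗), one can effectively find a pure Σ₁ formula φ°(x⃗) such that (1) the standard model ℕ satisfies ∀x⃗ (φ(x⃗) ↔ φ°(x⃗)), and (2) the implication ∀x⃗ (φ°(x⃗) → φ(x⃗)) is logically valid (provable in pure first-order logic). -/
open FirstOrder FirstOrder.Language

/-- Function symbols of the arithmetic language `L_a = {0, S, +, ×, ≤}`. -/
inductive AFunc : ℕ → Type
  | zero : AFunc 0
  | succ : AFunc 1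
  | add : AFunc 2
  | mul : AFunc 2

/-- Relation symbols of `L_a`: the single binary relation `≤`. -/
inductive ARel : ℕ → Type
  | le : ARel 2

/-- The first-order language of arithmetic `L_a = {0, S, +, ×, ≤}`. -/
def La : Language := ⟨AFunc, ARel⟩

/-- The standard model ℕ as an `La`-structure. -/
instance : La.Structure ℕ where
  funMap := fun {n} f => match f with
    | .zero => fun _ => 0
    | .succ => fun v => v 0 + 1
    | .add => fun v => v 0 + v 1
    | .mul => fun v => v 0 * v 1
  RelMap := fun {n} r => match r with
    | .le => fun v => v 0 ≤ v 1

/-- The term `0`. -/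
def zeroT {β : Type} : La.Term β := Term.func AFunc.zero ![]
/-- The term `S t`. -/
def succT {β : Type} (t : La.Term β) : La.Term β := Term.func AFunc.succ ![t]
/-- The term `t + u`. -/
def addT {β : Type} (t u : La.Term β) : La.Term β := Term.func AFunc.add ![t, u]
/-- The term `t × u`. -/
def mulT {β : Type} (t u : La.Term β) : La.Term β := Term.func AFunc.mul ![t, u]

/-- The numeral `S…S0`. -/
def num {β : Type} : ℕ → La.Term β
  | 0 => zeroT
  | n + 1 => succT (num n)

/-- The atomic formula `t ≤ u`. -/
def leF {α : Type} {n : ℕ} (t u : La.Term (α ⊕ Fin n)) : La.BoundedFormula α n :=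
  Relations.boundedFormula ARel.le ![t, u]

/-- The formula `t < u`, i.e. `t ≤ u ∧ t ≠ u`. -/
def ltF {α : Type} {n : ℕ} (t u : La.Term (α ⊕ Fin n)) : La.BoundedFormula α n :=
  leF t u ⊓ ∼(t =' u)

/-- Lift a term of context `n` to context `n+1`. -/
def liftT {α : Type} {n : ℕ} (t : La.Term (α ⊕ Fin n)) : La.Term (α ⊕ Fin (n + 1)) :=
  t.relabel (Sum.map id Fin.castSucc)

/-- The de Bruijn variable `i` as a term. -/
def vr {α : Type} {n : ℕ} (i : Fin n) : La.Term (α ⊕ Fin n) := Term.var (Sum.inr i)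

/-- Δ₀-formulas of `L_a`: built from atomic formulas by Boolean connectives and
bounded quantifiers `∀ y ≤ t`, `∃ y ≤ t`. -/
inductive IsDelta0 : ∀ {α : Type} {n : ℕ}, La.BoundedFormula α n → Prop
  | falsum {α : Type} {n : ℕ} : IsDelta0 (⊥ : La.BoundedFormula α n)
  | equal {α : Type} {n : ℕ} (t u : La.Term (α ⊕ Fin n)) : IsDelta0 (t =' u)
  | le {α : Type} {n : ℕ} (t u : La.Term (α ⊕ Fin n)) : IsDelta0 (leF t u)
  | imp {α : Type} {n : ℕ} {φ ψ : La.BoundedFormula α n} :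
      IsDelta0 φ → IsDelta0 ψ → IsDelta0 (φ ⟹ ψ)
  | ball {α : Type} {n : ℕ} (t : La.Term (α ⊕ Fin n)) {φ : La.BoundedFormula α (n + 1)} :
      IsDelta0 φ →
      IsDelta0 (∀' (leF (Term.var (Sum.inr (Fin.last n))) (liftT t) ⟹ φ))
  | bex {α : Type} {n : ℕ} (t : La.Term (α ⊕ Fin n)) {φ : La.BoundedFormula α (n + 1)} :
      IsDelta0 φ →
      IsDelta0 (∃' (leF (Term.var (Sum.inr (Fin.last n))) (liftT t) ⊓ φ))

/-- A Σ₁-formula: an existential block (possibly empty) in front of a Δ₀-formula. -/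
def IsSigma1 {α : Type} (φ : La.Formula α) : Prop :=
  ∃ (m : ℕ) (δ : La.BoundedFormula α m), IsDelta0 δ ∧ φ = δ.exs

/-- Pure Δ₀-formulas: Δ₀-formulas in which the atomic subformulas are only
`x₀ = x₁`, `0 = x₀`, `S x₀ = x₁`, `x₀ + x₁ = x₂`, `x₀ × x₁ = x₂`, and `x₀ ≤ x₁`,
with all arguments variables, and the bounds of bounded quantifiers are variables. -/
inductive IsPureDelta0 : ∀ {α : Type} {n : ℕ}, La.BoundedFormula α n → Prop
  | eq {α : Type} {n : ℕ} (w₁ w₂ : α ⊕ Fin n) :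
      IsPureDelta0 ((Term.var w₁ : La.Term _) =' Term.var w₂)
  | zeroEq {α : Type} {n : ℕ} (w : α ⊕ Fin n) :
      IsPureDelta0 ((zeroT : La.Term _) =' Term.var w)
  | succEq {α : Type} {n : ℕ} (w₁ w₂ : α ⊕ Fin n) :
      IsPureDelta0 (succT (Term.var w₁) =' (Term.var w₂ : La.Term _))
  | addEq {α : Type} {n : ℕ} (w₁ w₂ w₃ : α ⊕ Fin n) :
      IsPureDelta0 (addT (Term.var w₁) (Term.var w₂) =' (Term.var w₃ : La.Term _))
  | mulEq {α : Type} {n : ℕ} (w₁ w₂ w₃ : α ⊕ Fin n) :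
      IsPureDelta0 (mulT (Term.var w₁) (Term.var w₂) =' (Term.var w₃ : La.Term _))
  | le {α : Type} {n : ℕ} (w₁ w₂ : α ⊕ Fin n) :
      IsPureDelta0 (leF (Term.var w₁) (Term.var w₂))
  | falsum {α : Type} {n : ℕ} : IsPureDelta0 (⊥ : La.BoundedFormula α n)
  | imp {α : Type} {n : ℕ} {φ ψ : La.BoundedFormula α n} :
      IsPureDelta0 φ → IsPureDelta0 ψ → IsPureDelta0 (φ ⟹ ψ)
  | ball {α : Type} {n : ℕ} (w : α ⊕ Fin n) {φ : La.BoundedFormula α (n + 1)} :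
      IsPureDelta0 φ →
      IsPureDelta0 (∀' (leF (Term.var (Sum.inr (Fin.last n))) (Term.var (Sum.map id Fin.castSucc w)) ⟹ φ))
  | bex {α : Type} {n : ℕ} (w : α ⊕ Fin n) {φ : La.BoundedFormula α (n + 1)} :
      IsPureDelta0 φ →
      IsPureDelta0 (∃' (leF (Term.var (Sum.inr (Fin.last n))) (Term.var (Sum.map id Fin.castSucc w)) ⊓ φ))

/-- A pure Σ₁-formula: an existential block (possibly empty) in front of a pure Δ₀-formula. -/
def IsPureSigma1 {α : Type} (φ : La.Formula α) : Prop :=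
  ∃ (m : ℕ) (δ : La.BoundedFormula α m), IsPureDelta0 δ ∧ φ = δ.exs

/-- A pure 1-Σ₁ sentence: `∃x σ₀(x)` with `σ₀` pure Δ₀ and a single existential quantifier. -/
def IsPure1Sigma1 (σ : La.Sentence) : Prop :=
  ∃ δ : La.BoundedFormula Empty 1, IsPureDelta0 δ ∧ σ = ∃' δ

/-! ### Auxiliary development -/

namespace Statement0Aux

open FirstOrder.Language.BoundedFormula

variable {M : Type} [La.Structure M]

/-- Lift a variable to a context with one more de Bruijn variable. -/
def lift1 {α : Type} {n : ℕ} (w : α ⊕ Fin n) : α ⊕ Fin (n + 1) :=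
  Sum.map id Fin.castSucc w

/-- The `≤` relation of an arbitrary `La`-structure. -/
def leM (a b : M) : Prop := Structure.RelMap (L := La) ARel.le ![a, b]

lemma leM_nat (a b : ℕ) : leM a b ↔ a ≤ b := Iff.rfl

lemma elim_snoc_lift1 {α : Type} {n : ℕ} (v : α → M) (xs : Fin n → M) (a : M) :
    (Sum.elim v (Fin.snoc xs a) ∘ lift1) = Sum.elim v xs := by
  funext w
  cases w with
  | inl x => rfl
  | inr i => simp [lift1, Fin.snoc_castSucc]

lemma elim_snoc_lift1' {α : Type} {n : ℕ} (v : α → M) (xs : Fin n → M) (a : M)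
    (w : α ⊕ Fin n) :
    Sum.elim v (Fin.snoc xs a) (lift1 w) = Sum.elim v xs w :=
  congrFun (elim_snoc_lift1 v xs a) w

lemma elim_snoc_last {α : Type} {n : ℕ} (v : α → M) (xs : Fin n → M) (a : M) :
    Sum.elim v (Fin.snoc xs a) (Sum.inr (Fin.last n)) = a := by
  simp

/-- Realization of `leF`. -/
lemma realize_leF {α : Type} {n : ℕ} (t u : La.Term (α ⊕ Fin n))
    (v : α → M) (xs : Fin n → M) :
    (leF t u).Realize v xs ↔
      leM (t.realize (Sum.elim v xs)) (u.realize (Sum.elim v xs)) := by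
  rw [leF, leM]
  erw [BoundedFormula.realize_rel]
  have : (fun i => Term.realize (Sum.elim v xs) (![t, u] i)) =
      ![t.realize (Sum.elim v xs), u.realize (Sum.elim v xs)] := by
    funext i; fin_cases i <;> simp
  rw [this]

end Statement0Aux

namespace Statement0Aux

variable {M : Type} [La.Structure M]

/-- Bounded existential with a variable bound, in the exact shape of `IsPureDelta0.bex`. -/
def bexV {α : Type} {n : ℕ} (w : α ⊕ Fin n) (φ : La.BoundedFormula α (n + 1)) :
    La.BoundedFormula α n :=
  ∃' (leF (Term.var (Sum.inr (Fin.last n))) (Term.var (Sum.map id Fin.castSucc w)) ⊓ φ)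

/-- Bounded universal with a variable bound, in the exact shape of `IsPureDelta0.ball`. -/
def ballV {α : Type} {n : ℕ} (w : α ⊕ Fin n) (φ : La.BoundedFormula α (n + 1)) :
    La.BoundedFormula α n :=
  ∀' (leF (Term.var (Sum.inr (Fin.last n))) (Term.var (Sum.map id Fin.castSucc w)) ⟹ φ)

lemma _root_.IsPureDelta0.bexV {α : Type} {n : ℕ} (w : α ⊕ Fin n)
    {φ : La.BoundedFormula α (n + 1)} (h : IsPureDelta0 φ) :
    IsPureDelta0 (Statement0Aux.bexV w φ) := IsPureDelta0.bex w h

lemma _root_.IsPureDelta0.ballV {α : Type} {n : ℕ} (w : α ⊕ Fin n)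
    {φ : La.BoundedFormula α (n + 1)} (h : IsPureDelta0 φ) :
    IsPureDelta0 (Statement0Aux.ballV w φ) := IsPureDelta0.ball w h

lemma _root_.IsPureDelta0.not {α : Type} {n : ℕ} {φ : La.BoundedFormula α n}
    (h : IsPureDelta0 φ) : IsPureDelta0 (∼φ) := h.imp IsPureDelta0.falsum

lemma _root_.IsPureDelta0.inf {α : Type} {n : ℕ} {φ ψ : La.BoundedFormula α n}
    (h : IsPureDelta0 φ) (h' : IsPureDelta0 ψ) : IsPureDelta0 (φ ⊓ ψ) :=
  (h.imp h'.not).not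

lemma realize_bexV {α : Type} {n : ℕ} (w : α ⊕ Fin n) (φ : La.BoundedFormula α (n + 1))
    (v : α → M) (xs : Fin n → M) :
    (bexV w φ).Realize v xs ↔
      ∃ a : M, leM a (Sum.elim v xs w) ∧ φ.Realize v (Fin.snoc xs a) := by
  rw [bexV, BoundedFormula.realize_ex]
  refine exists_congr fun a => ?_
  rw [BoundedFormula.realize_inf, realize_leF]
  simp only [Term.realize_var, elim_snoc_last]
  rw [show (Sum.map id Fin.castSucc w : α ⊕ Fin (n+1)) = lift1 w from rfl,
    elim_snoc_lift1']

lemma realize_ballV {α : Type} {n : ℕ} (w : α ⊕ Fin n) (φ : La.BoundedFormula α (n + 1))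
    (v : α → M) (xs : Fin n → M) :
    (ballV w φ).Realize v xs ↔
      ∀ a : M, leM a (Sum.elim v xs w) → φ.Realize v (Fin.snoc xs a) := by
  rw [ballV, BoundedFormula.realize_all]
  refine forall_congr' fun a => ?_
  rw [BoundedFormula.realize_imp, realize_leF]
  simp only [Term.realize_var, elim_snoc_last]
  rw [show (Sum.map id Fin.castSucc w : α ⊕ Fin (n+1)) = lift1 w from rfl,
    elim_snoc_lift1']

/-- Realization of the `Δ₀` bounded universal shape (term bound). -/
lemma realize_ballT {α : Type} {n : ℕ} (t : La.Term (α ⊕ Fin n))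
    (φ : La.BoundedFormula α (n + 1)) (v : α → M) (xs : Fin n → M) :
    (∀' (leF (Term.var (Sum.inr (Fin.last n))) (liftT t) ⟹ φ)).Realize v xs ↔
      ∀ a : M, leM a (t.realize (Sum.elim v xs)) → φ.Realize v (Fin.snoc xs a) := by
  rw [BoundedFormula.realize_all]
  refine forall_congr' fun a => ?_
  rw [BoundedFormula.realize_imp, realize_leF]
  simp only [Term.realize_var, elim_snoc_last]
  rw [liftT, Term.realize_relabel,
    show (Sum.map id Fin.castSucc : α ⊕ Fin n → α ⊕ Fin (n+1)) = lift1 from rfl,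
    elim_snoc_lift1]

lemma realize_bexT {α : Type} {n : ℕ} (t : La.Term (α ⊕ Fin n))
    (φ : La.BoundedFormula α (n + 1)) (v : α → M) (xs : Fin n → M) :
    (∃' (leF (Term.var (Sum.inr (Fin.last n))) (liftT t) ⊓ φ)).Realize v xs ↔
      ∃ a : M, leM a (t.realize (Sum.elim v xs)) ∧ φ.Realize v (Fin.snoc xs a) := by
  rw [BoundedFormula.realize_ex]
  refine exists_congr fun a => ?_
  rw [BoundedFormula.realize_inf, realize_leF]
  simp only [Term.realize_var, elim_snoc_last]
  rw [liftT, Term.realize_relabel,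
    show (Sum.map id Fin.castSucc : α ⊕ Fin n → α ⊕ Fin (n+1)) = lift1 from rfl,
    elim_snoc_lift1]

/-- Realization of the constant term `0`. -/
lemma realize_zeroT {γ : Type} (e : γ → M) :
    (zeroT : La.Term γ).realize e = Structure.funMap (L := La) AFunc.zero ![] := by
  rw [zeroT]; erw [Term.realize_func]
  exact congrArg _ (Subsingleton.elim _ _)

lemma realize_succT {γ : Type} (e : γ → M) (t : La.Term γ) :
    (succT t).realize e = Structure.funMap (L := La) AFunc.succ ![t.realize e] := by
  rw [succT]; erw [Term.realize_func]
  refine congrArg _ ?_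
  funext i; fin_cases i <;> simp

lemma realize_addT {γ : Type} (e : γ → M) (t u : La.Term γ) :
    (addT t u).realize e = Structure.funMap (L := La) AFunc.add ![t.realize e, u.realize e] := by
  rw [addT]; erw [Term.realize_func]
  refine congrArg _ ?_
  funext i; fin_cases i <;> simp

lemma realize_mulT {γ : Type} (e : γ → M) (t u : La.Term γ) :
    (mulT t u).realize e = Structure.funMap (L := La) AFunc.mul ![t.realize e, u.realize e] := by
  rw [mulT]; erw [Term.realize_func]
  refine congrArg _ ?_
  funext i; fin_cases i <;> simp

end Statement0Aux

namespace Statement0Aux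

/-- The maximum value of all subterms of `t` under environment `e` (over `ℕ`). -/
def tmax {γ : Type} : La.Term γ → (γ → ℕ) → ℕ
  | Term.var w, e => e w
  | Term.func f ts, e =>
      Term.realize e (Term.func f ts) ⊔ (Finset.univ.sup fun i => tmax (ts i) e)

lemma realize_le_tmax {γ : Type} (t : La.Term γ) (e : γ → ℕ) :
    t.realize e ≤ tmax t e := by
  cases t with
  | var w => simp [tmax, Term.realize]
  | func f ts => exact le_sup_left

lemma tmax_comp_le {γ : Type} {l : ℕ} (f : AFunc l) (ts : Fin l → La.Term γ)
    (e : γ → ℕ) (i : Fin l) : tmax (ts i) e ≤ tmax (Term.func f ts) e := by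
  have h1 : tmax (ts i) e ≤ Finset.univ.sup (fun j => tmax (ts j) e) :=
    Finset.le_sup (f := fun j => tmax (ts j) e) (Finset.mem_univ i)
  show tmax (ts i) e ≤ Term.realize e (Term.func f ts) ⊔ (Finset.univ.sup fun j => tmax (ts j) e)
  exact h1.trans le_sup_right

end Statement0Aux

namespace Statement0Aux

lemma comp_lift1 {α : Type} {n : ℕ} {M : Type} [La.Structure M] (v : α → M) (xs : Fin n → M) (a : M)
    {γ : Type} (ρ : γ → α ⊕ Fin n) :
    (Sum.elim v (Fin.snoc xs a) ∘ fun g => lift1 (ρ g)) = Sum.elim v xs ∘ ρ := by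
  funext g
  exact elim_snoc_lift1' v xs a (ρ g)

/-- The graph of a term, as a pure Δ₀ formula: `φ` asserts that variable `tg`
equals the value of `t` (under `ρ`), using witnesses bounded by variable `b`. -/
lemma graph {γ : Type} (t : La.Term γ) :
    ∀ {α : Type} {n : ℕ} (ρ : γ → α ⊕ Fin n) (b tg : α ⊕ Fin n),
    ∃ φ : La.BoundedFormula α n, IsPureDelta0 φ ∧
      (∀ (M : Type) [La.Structure M] (v : α → M) (xs : Fin n → M),
        φ.Realize v xs → Sum.elim v xs tg = t.realize (Sum.elim v xs ∘ ρ)) ∧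
      (∀ (v : α → ℕ) (xs : Fin n → ℕ),
        tmax t (Sum.elim v xs ∘ ρ) ≤ Sum.elim v xs b →
        Sum.elim v xs tg = t.realize (Sum.elim v xs ∘ ρ) →
        φ.Realize v xs) := by
  induction t with
  | var w =>
    intro α n ρ b tg
    refine ⟨Term.var (ρ w) =' Term.var tg, IsPureDelta0.eq _ _, ?_, ?_⟩
    · intro M _ v xs h
      rw [BoundedFormula.realize_bdEqual] at h
      simp only [Term.realize_var] at h ⊢
      simp [Term.realize, h.symm]
    · intro v xs _ htg
      rw [BoundedFormula.realize_bdEqual]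
      simp only [Term.realize_var]
      simpa [Term.realize] using htg.symm
  | func f ts ih =>
    intro α n ρ b tg
    cases f with
    | zero =>
      refine ⟨zeroT =' Term.var tg, IsPureDelta0.zeroEq _, ?_, ?_⟩
      · intro M _ v xs h
        rw [BoundedFormula.realize_bdEqual, realize_zeroT] at h
        simp only [Term.realize_var] at h
        rw [← h]; erw [Term.realize_func]
        exact congrArg _ (Subsingleton.elim _ _)
      · intro v xs _ htg
        rw [BoundedFormula.realize_bdEqual, realize_zeroT]
        simp only [Term.realize_var]
        rw [htg]; erw [Term.realize_func]
        exact congrArg _ (Subsingleton.elim _ _)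
    | succ =>
      obtain ⟨φ₁, hp₁, hA₁, hB₁⟩ := ih 0 (fun g => lift1 (ρ g)) (lift1 b) (Sum.inr (Fin.last n))
      refine ⟨bexV b (φ₁ ⊓ (succT (Term.var (Sum.inr (Fin.last n))) =' Term.var (lift1 tg))),
        IsPureDelta0.bexV b (hp₁.inf (IsPureDelta0.succEq _ _)), ?_, ?_⟩
      · intro M _ v xs h
        rw [realize_bexV] at h
        obtain ⟨a, -, h⟩ := h
        rw [BoundedFormula.realize_inf] at h
        obtain ⟨h₁, h₂⟩ := h
        have e₁ := hA₁ M v (Fin.snoc xs a) h₁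
        rw [comp_lift1, elim_snoc_last] at e₁
        rw [BoundedFormula.realize_bdEqual, realize_succT] at h₂
        simp only [Term.realize_var, elim_snoc_last, elim_snoc_lift1'] at h₂
        rw [← h₂]; erw [Term.realize_func]
        refine congrArg _ ?_
        funext i
        fin_cases i
        simp [e₁]
      · intro v xs hbd htg
        rw [realize_bexV]
        refine ⟨(ts 0).realize (Sum.elim v xs ∘ ρ), ?_, ?_⟩
        · rw [leM_nat]
          exact le_trans (le_trans (realize_le_tmax _ _) (tmax_comp_le _ _ _ 0)) hbd
        · rw [BoundedFormula.realize_inf]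
          constructor
          · refine hB₁ v _ ?_ ?_
            · rw [comp_lift1, elim_snoc_lift1']
              exact le_trans (tmax_comp_le _ _ _ 0) hbd
            · rw [comp_lift1, elim_snoc_last]
          · rw [BoundedFormula.realize_bdEqual, realize_succT]
            simp only [Term.realize_var, elim_snoc_last, elim_snoc_lift1']
            rw [htg]; erw [Term.realize_func]
            refine congrArg _ ?_
            funext i
            fin_cases i
            simp
    | add =>
      obtain ⟨φ₁, hp₁, hA₁, hB₁⟩ := ih 0 (fun g => lift1 (lift1 (ρ g)))
        (lift1 (lift1 b)) (lift1 (Sum.inr (Fin.last n)))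
      obtain ⟨φ₂, hp₂, hA₂, hB₂⟩ := ih 1 (fun g => lift1 (lift1 (ρ g)))
        (lift1 (lift1 b)) (Sum.inr (Fin.last (n + 1)))
      refine ⟨bexV b (bexV (lift1 b) (φ₁ ⊓ (φ₂ ⊓
          (addT (Term.var (lift1 (Sum.inr (Fin.last n)))) (Term.var (Sum.inr (Fin.last (n + 1))))
            =' Term.var (lift1 (lift1 tg)))))),
        IsPureDelta0.bexV b (IsPureDelta0.bexV (lift1 b)
          (hp₁.inf (hp₂.inf (IsPureDelta0.addEq _ _ _)))), ?_, ?_⟩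
      · intro M _ v xs h
        rw [realize_bexV] at h
        obtain ⟨a₁, -, h⟩ := h
        rw [realize_bexV] at h
        obtain ⟨a₂, -, h⟩ := h
        rw [BoundedFormula.realize_inf, BoundedFormula.realize_inf] at h
        obtain ⟨h₁, h₂, h₃⟩ := h
        have e₁ := hA₁ M v (Fin.snoc (Fin.snoc xs a₁) a₂) h₁
        have e₂ := hA₂ M v (Fin.snoc (Fin.snoc xs a₁) a₂) h₂
        rw [comp_lift1, comp_lift1, elim_snoc_lift1', elim_snoc_last] at e₁
        rw [comp_lift1, comp_lift1, elim_snoc_last] at e₂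
        rw [BoundedFormula.realize_bdEqual, realize_addT] at h₃
        simp only [Term.realize_var, elim_snoc_last, elim_snoc_lift1'] at h₃
        rw [← h₃]; erw [Term.realize_func]
        refine congrArg _ ?_
        funext i
        fin_cases i
        · simpa using e₁
        · simpa using e₂
      · intro v xs hbd htg
        rw [realize_bexV]
        refine ⟨(ts 0).realize (Sum.elim v xs ∘ ρ), ?_, ?_⟩
        · rw [leM_nat]
          exact le_trans (le_trans (realize_le_tmax _ _) (tmax_comp_le _ _ _ 0)) hbd
        rw [realize_bexV]
        refine ⟨(ts 1).realize (Sum.elim v xs ∘ ρ), ?_, ?_⟩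
        · rw [leM_nat, elim_snoc_lift1']
          exact le_trans (le_trans (realize_le_tmax _ _) (tmax_comp_le _ _ _ 1)) hbd
        rw [BoundedFormula.realize_inf, BoundedFormula.realize_inf]
        refine ⟨?_, ?_, ?_⟩
        · refine hB₁ v _ ?_ ?_
          · rw [comp_lift1, comp_lift1, elim_snoc_lift1', elim_snoc_lift1']
            exact le_trans (tmax_comp_le _ _ _ 0) hbd
          · rw [comp_lift1, comp_lift1, elim_snoc_lift1', elim_snoc_last]
        · refine hB₂ v _ ?_ ?_
          · rw [comp_lift1, comp_lift1, elim_snoc_lift1', elim_snoc_lift1']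
            exact le_trans (tmax_comp_le _ _ _ 1) hbd
          · rw [comp_lift1, comp_lift1, elim_snoc_last]
        · rw [BoundedFormula.realize_bdEqual, realize_addT]
          simp only [Term.realize_var, elim_snoc_last, elim_snoc_lift1']
          rw [htg]; erw [Term.realize_func]
          refine congrArg _ ?_
          funext i
          fin_cases i <;> simp
    | mul =>
      obtain ⟨φ₁, hp₁, hA₁, hB₁⟩ := ih 0 (fun g => lift1 (lift1 (ρ g)))
        (lift1 (lift1 b)) (lift1 (Sum.inr (Fin.last n)))
      obtain ⟨φ₂, hp₂, hA₂, hB₂⟩ := ih 1 (fun g => lift1 (lift1 (ρ g)))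
        (lift1 (lift1 b)) (Sum.inr (Fin.last (n + 1)))
      refine ⟨bexV b (bexV (lift1 b) (φ₁ ⊓ (φ₂ ⊓
          (mulT (Term.var (lift1 (Sum.inr (Fin.last n)))) (Term.var (Sum.inr (Fin.last (n + 1))))
            =' Term.var (lift1 (lift1 tg)))))),
        IsPureDelta0.bexV b (IsPureDelta0.bexV (lift1 b)
          (hp₁.inf (hp₂.inf (IsPureDelta0.mulEq _ _ _)))), ?_, ?_⟩
      · intro M _ v xs h
        rw [realize_bexV] at h
        obtain ⟨a₁, -, h⟩ := h
        rw [realize_bexV] at h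
        obtain ⟨a₂, -, h⟩ := h
        rw [BoundedFormula.realize_inf, BoundedFormula.realize_inf] at h
        obtain ⟨h₁, h₂, h₃⟩ := h
        have e₁ := hA₁ M v (Fin.snoc (Fin.snoc xs a₁) a₂) h₁
        have e₂ := hA₂ M v (Fin.snoc (Fin.snoc xs a₁) a₂) h₂
        rw [comp_lift1, comp_lift1, elim_snoc_lift1', elim_snoc_last] at e₁
        rw [comp_lift1, comp_lift1, elim_snoc_last] at e₂
        rw [BoundedFormula.realize_bdEqual, realize_mulT] at h₃
        simp only [Term.realize_var, elim_snoc_last, elim_snoc_lift1'] at h₃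
        rw [← h₃]; erw [Term.realize_func]
        refine congrArg _ ?_
        funext i
        fin_cases i
        · simpa using e₁
        · simpa using e₂
      · intro v xs hbd htg
        rw [realize_bexV]
        refine ⟨(ts 0).realize (Sum.elim v xs ∘ ρ), ?_, ?_⟩
        · rw [leM_nat]
          exact le_trans (le_trans (realize_le_tmax _ _) (tmax_comp_le _ _ _ 0)) hbd
        rw [realize_bexV]
        refine ⟨(ts 1).realize (Sum.elim v xs ∘ ρ), ?_, ?_⟩
        · rw [leM_nat, elim_snoc_lift1']
          exact le_trans (le_trans (realize_le_tmax _ _) (tmax_comp_le _ _ _ 1)) hbd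
        rw [BoundedFormula.realize_inf, BoundedFormula.realize_inf]
        refine ⟨?_, ?_, ?_⟩
        · refine hB₁ v _ ?_ ?_
          · rw [comp_lift1, comp_lift1, elim_snoc_lift1', elim_snoc_lift1']
            exact le_trans (tmax_comp_le _ _ _ 0) hbd
          · rw [comp_lift1, comp_lift1, elim_snoc_lift1', elim_snoc_last]
        · refine hB₂ v _ ?_ ?_
          · rw [comp_lift1, comp_lift1, elim_snoc_lift1', elim_snoc_lift1']
            exact le_trans (tmax_comp_le _ _ _ 1) hbd
          · rw [comp_lift1, comp_lift1, elim_snoc_last]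
        · rw [BoundedFormula.realize_bdEqual, realize_mulT]
          simp only [Term.realize_var, elim_snoc_last, elim_snoc_lift1']
          rw [htg]; erw [Term.realize_func]
          refine congrArg _ ?_
          funext i
          fin_cases i <;> simp


end Statement0Aux

namespace Statement0Aux

lemma elim_comp {α β : Type} {n m : ℕ} {M : Type} (v : β → M) (xs : Fin m → M)
    (ρ : α ⊕ Fin n → β ⊕ Fin m) :
    Sum.elim (fun a => Sum.elim v xs (ρ (Sum.inl a))) (fun i => Sum.elim v xs (ρ (Sum.inr i)))
      = Sum.elim v xs ∘ ρ := by
  funext w; cases w <;> rfl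

/-- Extension of a renaming to one more de Bruijn variable. -/
def extρ {α β : Type} {n m : ℕ} (ρ : α ⊕ Fin n → β ⊕ Fin m) :
    α ⊕ Fin (n + 1) → β ⊕ Fin (m + 1) := fun z =>
  match z with
  | Sum.inl a => lift1 (ρ (Sum.inl a))
  | Sum.inr i => Fin.lastCases (Sum.inr (Fin.last m)) (fun j => lift1 (ρ (Sum.inr j))) i

lemma extρ_inl {α β : Type} {n m : ℕ} (ρ : α ⊕ Fin n → β ⊕ Fin m) (a : α) :
    extρ ρ (Sum.inl a) = lift1 (ρ (Sum.inl a)) := rfl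

lemma extρ_last {α β : Type} {n m : ℕ} (ρ : α ⊕ Fin n → β ⊕ Fin m) :
    extρ ρ (Sum.inr (Fin.last n)) = Sum.inr (Fin.last m) := by
  simp [extρ]

lemma extρ_castSucc {α β : Type} {n m : ℕ} (ρ : α ⊕ Fin n → β ⊕ Fin m) (j : Fin n) :
    extρ ρ (Sum.inr (Fin.castSucc j)) = lift1 (ρ (Sum.inr j)) := by
  simp [extρ]

lemma ext_env {α β : Type} {n m : ℕ} {M : Type} [La.Structure M] (v : β → M)
    (xs : Fin m → M) (a : M) (ρ : α ⊕ Fin n → β ⊕ Fin m) :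
    ((fun x => Sum.elim v (Fin.snoc xs a) (extρ ρ (Sum.inl x))) =
        fun x => Sum.elim v xs (ρ (Sum.inl x))) ∧
    ((fun i => Sum.elim v (Fin.snoc xs a) (extρ ρ (Sum.inr i))) =
        Fin.snoc (fun i => Sum.elim v xs (ρ (Sum.inr i))) a) := by
  constructor
  · funext x
    rw [extρ_inl, elim_snoc_lift1']
  · funext i
    induction i using Fin.lastCases with
    | last => rw [extρ_last, elim_snoc_last, Fin.snoc_last]
    | cast j => rw [extρ_castSucc, elim_snoc_lift1', Fin.snoc_castSucc]

/-- Pure Δ₀ formulas can be renamed along arbitrary variable maps. -/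
lemma pure_rename : ∀ {α : Type} {n : ℕ} {φ : La.BoundedFormula α n}, IsPureDelta0 φ →
    ∀ {β : Type} {m : ℕ} (ρ : α ⊕ Fin n → β ⊕ Fin m),
    ∃ ψ : La.BoundedFormula β m, IsPureDelta0 ψ ∧
      ∀ (M : Type) [La.Structure M] (v : β → M) (xs : Fin m → M),
        ψ.Realize v xs ↔ φ.Realize (fun a => Sum.elim v xs (ρ (Sum.inl a)))
          (fun i => Sum.elim v xs (ρ (Sum.inr i))) := by
  intro α n φ h
  induction h with
  | eq w₁ w₂ =>
    intro β m ρ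
    refine ⟨Term.var (ρ w₁) =' Term.var (ρ w₂), IsPureDelta0.eq _ _, ?_⟩
    intro M _ v xs
    rw [BoundedFormula.realize_bdEqual, BoundedFormula.realize_bdEqual, elim_comp]
    simp [Term.realize]
  | zeroEq w =>
    intro β m ρ
    refine ⟨zeroT =' Term.var (ρ w), IsPureDelta0.zeroEq _, ?_⟩
    intro M _ v xs
    rw [BoundedFormula.realize_bdEqual, BoundedFormula.realize_bdEqual, elim_comp,
      realize_zeroT, realize_zeroT]
    simp [Term.realize]
  | succEq w₁ w₂ =>
    intro β m ρ
    refine ⟨succT (Term.var (ρ w₁)) =' Term.var (ρ w₂), IsPureDelta0.succEq _ _, ?_⟩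
    intro M _ v xs
    rw [BoundedFormula.realize_bdEqual, BoundedFormula.realize_bdEqual, elim_comp,
      realize_succT, realize_succT]
    simp [Term.realize]
  | addEq w₁ w₂ w₃ =>
    intro β m ρ
    refine ⟨addT (Term.var (ρ w₁)) (Term.var (ρ w₂)) =' Term.var (ρ w₃),
      IsPureDelta0.addEq _ _ _, ?_⟩
    intro M _ v xs
    rw [BoundedFormula.realize_bdEqual, BoundedFormula.realize_bdEqual, elim_comp,
      realize_addT, realize_addT]
    simp [Term.realize]
  | mulEq w₁ w₂ w₃ =>
    intro β m ρ
    refine ⟨mulT (Term.var (ρ w₁)) (Term.var (ρ w₂)) =' Term.var (ρ w₃),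
      IsPureDelta0.mulEq _ _ _, ?_⟩
    intro M _ v xs
    rw [BoundedFormula.realize_bdEqual, BoundedFormula.realize_bdEqual, elim_comp,
      realize_mulT, realize_mulT]
    simp [Term.realize]
  | le w₁ w₂ =>
    intro β m ρ
    refine ⟨leF (Term.var (ρ w₁)) (Term.var (ρ w₂)), IsPureDelta0.le _ _, ?_⟩
    intro M _ v xs
    rw [realize_leF, realize_leF, elim_comp]
    simp [Term.realize]
  | falsum =>
    intro β m ρ
    exact ⟨⊥, IsPureDelta0.falsum, by simp⟩
  | imp h₁ h₂ ih₁ ih₂ =>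
    intro β m ρ
    obtain ⟨ψ₁, hp₁, hr₁⟩ := ih₁ ρ
    obtain ⟨ψ₂, hp₂, hr₂⟩ := ih₂ ρ
    refine ⟨ψ₁ ⟹ ψ₂, hp₁.imp hp₂, ?_⟩
    intro M _ v xs
    rw [BoundedFormula.realize_imp, BoundedFormula.realize_imp, hr₁, hr₂]
  | ball w h ih =>
    intro β m ρ
    obtain ⟨ψ₀, hp₀, hr₀⟩ := ih (extρ ρ)
    refine ⟨ballV (ρ w) ψ₀, IsPureDelta0.ballV _ hp₀, ?_⟩
    intro M _ v xs
    rw [realize_ballV,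
      show (∀' (leF (Term.var (Sum.inr (Fin.last _)))
          (Term.var (Sum.map id Fin.castSucc w)) ⟹ _)) = ballV w _ from rfl,
      realize_ballV]
    refine forall_congr' fun a => ?_
    rw [hr₀, (ext_env v xs a ρ).1, (ext_env v xs a ρ).2]
    have : Sum.elim (fun x => Sum.elim v xs (ρ (Sum.inl x)))
        (fun i => Sum.elim v xs (ρ (Sum.inr i))) w = Sum.elim v xs (ρ w) := by
      rw [elim_comp]; rfl
    rw [this]
  | bex w h ih =>
    intro β m ρ
    obtain ⟨ψ₀, hp₀, hr₀⟩ := ih (extρ ρ)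
    refine ⟨bexV (ρ w) ψ₀, IsPureDelta0.bexV _ hp₀, ?_⟩
    intro M _ v xs
    rw [realize_bexV,
      show (∃' (leF (Term.var (Sum.inr (Fin.last _)))
          (Term.var (Sum.map id Fin.castSucc w)) ⊓ _)) = bexV w _ from rfl,
      realize_bexV]
    refine exists_congr fun a => ?_
    rw [hr₀, (ext_env v xs a ρ).1, (ext_env v xs a ρ).2]
    have : Sum.elim (fun x => Sum.elim v xs (ρ (Sum.inl x)))
        (fun i => Sum.elim v xs (ρ (Sum.inr i))) w = Sum.elim v xs (ρ w) := by
      rw [elim_comp]; rfl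
    rw [this]

end Statement0Aux

namespace Statement0Aux

lemma comp_map_some {α : Type} {M : Type} [La.Structure M] {n : ℕ}
    (v : Option α → M) (xs : Fin n → M) :
    Sum.elim v xs ∘ Sum.map some id = Sum.elim (fun a => v (some a)) xs := by
  funext z; cases z <;> rfl


lemma comp2_map {α : Type} {M : Type} [La.Structure M] {n : ℕ}
    (v : Option α → M) (xs : Fin n → M) (a₁ a₂ : M) :
    (Sum.elim v (Fin.snoc (Fin.snoc xs a₁) a₂) ∘ fun z => lift1 (lift1 (Sum.map some id z)))
      = Sum.elim (fun a => v (some a)) xs := by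
  funext z
  cases z with
  | inl a => rfl
  | inr i =>
    show Sum.elim v (Fin.snoc (Fin.snoc xs a₁) a₂)
      (Sum.inr (Fin.castSucc (Fin.castSucc i))) = xs i
    simp [Fin.snoc_castSucc]


lemma comp1_map {α : Type} {M : Type} [La.Structure M] {n : ℕ}
    (v : Option α → M) (xs : Fin n → M) (a : M) :
    (Sum.elim v (Fin.snoc xs a) ∘ fun z => lift1 (Sum.map some id z))
      = Sum.elim (fun b => v (some b)) xs := by
  funext z
  cases z with
  | inl b => rfl
  | inr i =>
    show Sum.elim v (Fin.snoc xs a) (Sum.inr (Fin.castSucc i)) = xs i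
    simp [Fin.snoc_castSucc]

/-- The index swap used for bounded quantifier cases. -/
def ρswap {α : Type} {n : ℕ} : Option α ⊕ Fin (n + 1) → Option α ⊕ Fin (n + 2) := fun z =>
  match z with
  | Sum.inl o => Sum.inl o
  | Sum.inr i => Fin.lastCases (Sum.inr (Fin.last (n + 1)))
      (fun j => Sum.inr (Fin.castSucc (Fin.castSucc j))) i

lemma swap_env {α : Type} {M : Type} [La.Structure M] {n : ℕ}
    (v : Option α → M) (xs : Fin n → M) (a y : M) :
    ((fun o => Sum.elim v (Fin.snoc (Fin.snoc xs a) y) (ρswap (Sum.inl o))) = v) ∧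
    ((fun i => Sum.elim v (Fin.snoc (Fin.snoc xs a) y) (ρswap (Sum.inr i)))
      = Fin.snoc xs y) := by
  constructor
  · funext o; rfl
  · funext i
    induction i using Fin.lastCases with
    | last =>
      show Sum.elim v (Fin.snoc (Fin.snoc xs a) y) (ρswap (Sum.inr (Fin.last n))) = _
      have : ρswap (α := α) (Sum.inr (Fin.last n)) = Sum.inr (Fin.last (n + 1)) := by
        simp [ρswap]
      rw [this, Fin.snoc_last]
      simp
    | cast j =>
      have : ρswap (α := α) (Sum.inr (Fin.castSucc j))
          = Sum.inr (Fin.castSucc (Fin.castSucc j)) := by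
        simp [ρswap]
      rw [this, Fin.snoc_castSucc]
      simp [Fin.snoc_castSucc]

/-- Main translation lemma for Δ₀ formulas: positive and negative pure forms,
with an extra free variable (`none`) acting as the bound `B`. -/
lemma delta0_main {α : Type} {n : ℕ} {δ : La.BoundedFormula α n} (h : IsDelta0 δ) :
    ∃ φp φm : La.BoundedFormula (Option α) n,
      IsPureDelta0 φp ∧ IsPureDelta0 φm ∧
      (∀ (M : Type) [La.Structure M] (v : Option α → M) (xs : Fin n → M),
        (φp.Realize v xs → δ.Realize (fun a => v (some a)) xs) ∧
        (δ.Realize (fun a => v (some a)) xs → φm.Realize v xs)) ∧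
      (∀ (v : α → ℕ) (xs : Fin n → ℕ), ∃ B₀ : ℕ, ∀ B ≥ B₀,
        (δ.Realize v xs → φp.Realize (fun o => o.elim B v) xs) ∧
        (φm.Realize (fun o => o.elim B v) xs → δ.Realize v xs)) := by
  induction h with
  | falsum =>
    refine ⟨⊥, ⊥, IsPureDelta0.falsum, IsPureDelta0.falsum, ?_, ?_⟩
    · intro M _ v xs; simp
    · intro v xs; exact ⟨0, fun B _ => by simp⟩
  | @equal k t u =>
    obtain ⟨φt, hpt, hAt, hBt⟩ := graph t (fun z => lift1 (lift1 (Sum.map some id z)))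
      (Sum.inl none) (lift1 (Sum.inr (Fin.last k)))
    obtain ⟨φu, hpu, hAu, hBu⟩ := graph u (fun z => lift1 (lift1 (Sum.map some id z)))
      (Sum.inl none) (Sum.inr (Fin.last (k + 1)))
    refine ⟨bexV (Sum.inl none) (bexV (Sum.inl none) (φt ⊓ (φu ⊓ (Term.var (lift1 (Sum.inr (Fin.last k))) =' (Term.var (Sum.inr (Fin.last (k + 1))) : La.Term _))))),
      ballV (Sum.inl none) (ballV (Sum.inl none) (φt ⟹ (φu ⟹ (Term.var (lift1 (Sum.inr (Fin.last k))) =' (Term.var (Sum.inr (Fin.last (k + 1))) : La.Term _))))),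
      IsPureDelta0.bexV _ (IsPureDelta0.bexV _ (hpt.inf (hpu.inf (IsPureDelta0.eq _ _)))),
      IsPureDelta0.ballV _ (IsPureDelta0.ballV _ (hpt.imp (hpu.imp (IsPureDelta0.eq _ _)))),
      ?_, ?_⟩
    · intro M _ v xs
      constructor
      · intro hr
        rw [realize_bexV] at hr
        obtain ⟨a₁, -, hr⟩ := hr
        rw [realize_bexV] at hr
        obtain ⟨a₂, -, hr⟩ := hr
        rw [BoundedFormula.realize_inf, BoundedFormula.realize_inf] at hr
        obtain ⟨h₁, h₂, h₃⟩ := hr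
        have e₁ := hAt M v (Fin.snoc (Fin.snoc xs a₁) a₂) h₁
        have e₂ := hAu M v (Fin.snoc (Fin.snoc xs a₁) a₂) h₂
        rw [comp2_map, elim_snoc_lift1', elim_snoc_last] at e₁
        rw [comp2_map, elim_snoc_last] at e₂
        rw [BoundedFormula.realize_bdEqual] at h₃
        simp only [Term.realize_var, elim_snoc_last, elim_snoc_lift1'] at h₃
        rw [BoundedFormula.realize_bdEqual]
        rw [← e₁, ← e₂]
        exact h₃
      · intro hδ
        rw [realize_ballV]
        intro a₁ _
        rw [realize_ballV]
        intro a₂ _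
        rw [BoundedFormula.realize_imp, BoundedFormula.realize_imp]
        intro h₁ h₂
        have e₁ := hAt M v (Fin.snoc (Fin.snoc xs a₁) a₂) h₁
        have e₂ := hAu M v (Fin.snoc (Fin.snoc xs a₁) a₂) h₂
        rw [comp2_map, elim_snoc_lift1', elim_snoc_last] at e₁
        rw [comp2_map, elim_snoc_last] at e₂
        rw [BoundedFormula.realize_bdEqual] at hδ
        rw [BoundedFormula.realize_bdEqual]
        simp only [Term.realize_var, elim_snoc_last, elim_snoc_lift1']
        rw [e₁, e₂]
        exact hδ
    · intro v xs
      refine ⟨tmax t (Sum.elim v xs) ⊔ tmax u (Sum.elim v xs), fun B hB => ?_⟩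
      have hv : (fun a => (fun o => Option.elim o B v) (some a)) = v := rfl
      have htB : tmax t (Sum.elim v xs) ≤ B := le_trans le_sup_left hB
      have huB : tmax u (Sum.elim v xs) ≤ B := le_trans le_sup_right hB
      constructor
      · intro hδ
        rw [BoundedFormula.realize_bdEqual] at hδ
        rw [realize_bexV]
        refine ⟨t.realize (Sum.elim v xs), ?_, ?_⟩
        · rw [leM_nat]
          exact le_trans (realize_le_tmax _ _) htB
        rw [realize_bexV]
        refine ⟨u.realize (Sum.elim v xs), ?_, ?_⟩
        · rw [leM_nat]
          exact le_trans (realize_le_tmax _ _) huB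
        rw [BoundedFormula.realize_inf, BoundedFormula.realize_inf]
        refine ⟨?_, ?_, ?_⟩
        · refine hBt _ _ ?_ ?_ <;> rw [comp2_map, hv]
          · exact htB
          · rw [elim_snoc_lift1', elim_snoc_last]
        · refine hBu _ _ ?_ ?_ <;> rw [comp2_map, hv]
          · exact huB
          · rw [elim_snoc_last]
        · rw [BoundedFormula.realize_bdEqual]
          simp only [Term.realize_var, elim_snoc_last, elim_snoc_lift1']
          exact hδ
      · intro hr
        rw [realize_ballV] at hr
        have hr := hr (t.realize (Sum.elim v xs))
          (by rw [leM_nat]; exact le_trans (realize_le_tmax _ _) htB)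
        rw [realize_ballV] at hr
        have hr := hr (u.realize (Sum.elim v xs))
          (by rw [leM_nat]; exact le_trans (realize_le_tmax _ _) huB)
        rw [BoundedFormula.realize_imp, BoundedFormula.realize_imp] at hr
        have h₃ := hr ?_ ?_
        · rw [BoundedFormula.realize_bdEqual] at h₃
          simp only [Term.realize_var, elim_snoc_last, elim_snoc_lift1'] at h₃
          rw [BoundedFormula.realize_bdEqual]
          exact h₃
        · refine hBt _ _ ?_ ?_ <;> rw [comp2_map, hv]
          · exact htB
          · rw [elim_snoc_lift1', elim_snoc_last]
        · refine hBu _ _ ?_ ?_ <;> rw [comp2_map, hv]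
          · exact huB
          · rw [elim_snoc_last]

  | @le k t u =>
    obtain ⟨φt, hpt, hAt, hBt⟩ := graph t (fun z => lift1 (lift1 (Sum.map some id z)))
      (Sum.inl none) (lift1 (Sum.inr (Fin.last k)))
    obtain ⟨φu, hpu, hAu, hBu⟩ := graph u (fun z => lift1 (lift1 (Sum.map some id z)))
      (Sum.inl none) (Sum.inr (Fin.last (k + 1)))
    refine ⟨bexV (Sum.inl none) (bexV (Sum.inl none) (φt ⊓ (φu ⊓ leF (Term.var (lift1 (Sum.inr (Fin.last k)))) (Term.var (Sum.inr (Fin.last (k + 1))))))),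
      ballV (Sum.inl none) (ballV (Sum.inl none) (φt ⟹ (φu ⟹ leF (Term.var (lift1 (Sum.inr (Fin.last k)))) (Term.var (Sum.inr (Fin.last (k + 1))))))),
      IsPureDelta0.bexV _ (IsPureDelta0.bexV _ (hpt.inf (hpu.inf (IsPureDelta0.le _ _)))),
      IsPureDelta0.ballV _ (IsPureDelta0.ballV _ (hpt.imp (hpu.imp (IsPureDelta0.le _ _)))),
      ?_, ?_⟩
    · intro M _ v xs
      constructor
      · intro hr
        rw [realize_bexV] at hr
        obtain ⟨a₁, -, hr⟩ := hr
        rw [realize_bexV] at hr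
        obtain ⟨a₂, -, hr⟩ := hr
        rw [BoundedFormula.realize_inf, BoundedFormula.realize_inf] at hr
        obtain ⟨h₁, h₂, h₃⟩ := hr
        have e₁ := hAt M v (Fin.snoc (Fin.snoc xs a₁) a₂) h₁
        have e₂ := hAu M v (Fin.snoc (Fin.snoc xs a₁) a₂) h₂
        rw [comp2_map, elim_snoc_lift1', elim_snoc_last] at e₁
        rw [comp2_map, elim_snoc_last] at e₂
        rw [realize_leF] at h₃
        simp only [Term.realize_var, elim_snoc_last, elim_snoc_lift1'] at h₃
        rw [realize_leF]
        rw [← e₁, ← e₂]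
        exact h₃
      · intro hδ
        rw [realize_ballV]
        intro a₁ _
        rw [realize_ballV]
        intro a₂ _
        rw [BoundedFormula.realize_imp, BoundedFormula.realize_imp]
        intro h₁ h₂
        have e₁ := hAt M v (Fin.snoc (Fin.snoc xs a₁) a₂) h₁
        have e₂ := hAu M v (Fin.snoc (Fin.snoc xs a₁) a₂) h₂
        rw [comp2_map, elim_snoc_lift1', elim_snoc_last] at e₁
        rw [comp2_map, elim_snoc_last] at e₂
        rw [realize_leF] at hδ
        rw [realize_leF]
        simp only [Term.realize_var, elim_snoc_last, elim_snoc_lift1']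
        rw [e₁, e₂]
        exact hδ
    · intro v xs
      refine ⟨tmax t (Sum.elim v xs) ⊔ tmax u (Sum.elim v xs), fun B hB => ?_⟩
      have hv : (fun a => (fun o => Option.elim o B v) (some a)) = v := rfl
      have htB : tmax t (Sum.elim v xs) ≤ B := le_trans le_sup_left hB
      have huB : tmax u (Sum.elim v xs) ≤ B := le_trans le_sup_right hB
      constructor
      · intro hδ
        rw [realize_leF] at hδ
        rw [realize_bexV]
        refine ⟨t.realize (Sum.elim v xs), ?_, ?_⟩
        · rw [leM_nat]
          exact le_trans (realize_le_tmax _ _) htB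
        rw [realize_bexV]
        refine ⟨u.realize (Sum.elim v xs), ?_, ?_⟩
        · rw [leM_nat]
          exact le_trans (realize_le_tmax _ _) huB
        rw [BoundedFormula.realize_inf, BoundedFormula.realize_inf]
        refine ⟨?_, ?_, ?_⟩
        · refine hBt _ _ ?_ ?_ <;> rw [comp2_map, hv]
          · exact htB
          · rw [elim_snoc_lift1', elim_snoc_last]
        · refine hBu _ _ ?_ ?_ <;> rw [comp2_map, hv]
          · exact huB
          · rw [elim_snoc_last]
        · rw [realize_leF]
          simp only [Term.realize_var, elim_snoc_last, elim_snoc_lift1']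
          exact hδ
      · intro hr
        rw [realize_ballV] at hr
        have hr := hr (t.realize (Sum.elim v xs))
          (by rw [leM_nat]; exact le_trans (realize_le_tmax _ _) htB)
        rw [realize_ballV] at hr
        have hr := hr (u.realize (Sum.elim v xs))
          (by rw [leM_nat]; exact le_trans (realize_le_tmax _ _) huB)
        rw [BoundedFormula.realize_imp, BoundedFormula.realize_imp] at hr
        have h₃ := hr ?_ ?_
        · rw [realize_leF] at h₃
          simp only [Term.realize_var, elim_snoc_last, elim_snoc_lift1'] at h₃
          rw [realize_leF]
          exact h₃
        · refine hBt _ _ ?_ ?_ <;> rw [comp2_map, hv]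
          · exact htB
          · rw [elim_snoc_lift1', elim_snoc_last]
        · refine hBu _ _ ?_ ?_ <;> rw [comp2_map, hv]
          · exact huB
          · rw [elim_snoc_last]

  | imp h₁ h₂ ih₁ ih₂ =>
    obtain ⟨φ₁p, φ₁m, hp₁p, hp₁m, hM₁, hN₁⟩ := ih₁
    obtain ⟨φ₂p, φ₂m, hp₂p, hp₂m, hM₂, hN₂⟩ := ih₂
    refine ⟨φ₁m ⟹ φ₂p, φ₁p ⟹ φ₂m, hp₁m.imp hp₂p, hp₁p.imp hp₂m, ?_, ?_⟩
    · intro M _ v xs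
      constructor
      · intro hr hδ₁
        rw [BoundedFormula.realize_imp] at hr
        exact (hM₂ M v xs).1 (hr ((hM₁ M v xs).2 hδ₁))
      · intro hδ
        rw [BoundedFormula.realize_imp]
        intro h1p
        exact (hM₂ M v xs).2 (hδ ((hM₁ M v xs).1 h1p))
    · intro v xs
      obtain ⟨B₁, hB₁⟩ := hN₁ v xs
      obtain ⟨B₂, hB₂⟩ := hN₂ v xs
      refine ⟨B₁ ⊔ B₂, fun B hB => ?_⟩
      have h1 := hB₁ B (le_trans le_sup_left hB)
      have h2 := hB₂ B (le_trans le_sup_right hB)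
      constructor
      · intro hδ
        rw [BoundedFormula.realize_imp]
        intro h1m
        exact h2.1 (hδ (h1.2 h1m))
      · intro hr hδ₁
        rw [BoundedFormula.realize_imp] at hr
        exact h2.2 (hr (h1.1 hδ₁))
  | @ball k t φ₀ h₀ ih =>
    obtain ⟨φ₀p, φ₀m, hp₀p, hp₀m, hM₀, hN₀⟩ := ih
    obtain ⟨ψp, hpψp, hrψp⟩ := pure_rename hp₀p ρswap
    obtain ⟨ψm, hpψm, hrψm⟩ := pure_rename hp₀m ρswap
    obtain ⟨φt, hpt, hAt, hBt⟩ := graph t (fun z => lift1 (Sum.map some id z))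
      (Sum.inl none) (Sum.inr (Fin.last k))
    refine ⟨bexV (Sum.inl none) (φt ⊓ ballV (Sum.inr (Fin.last k)) ψp),
      ballV (Sum.inl none) (φt ⟹ ballV (Sum.inr (Fin.last k)) ψm),
      IsPureDelta0.bexV _ (hpt.inf (IsPureDelta0.ballV _ hpψp)),
      IsPureDelta0.ballV _ (hpt.imp (IsPureDelta0.ballV _ hpψm)), ?_, ?_⟩
    · intro M _ v xs
      constructor
      · intro hr
        rw [realize_bexV] at hr
        obtain ⟨a, -, hr⟩ := hr
        rw [BoundedFormula.realize_inf] at hr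
        obtain ⟨h₁, h₂⟩ := hr
        have e₁ := hAt M v (Fin.snoc xs a) h₁
        rw [comp1_map, elim_snoc_last] at e₁
        rw [realize_ballV] at h₂
        rw [realize_ballT]
        intro y hy
        rw [← e₁] at hy
        have h₂ := h₂ y (by rw [elim_snoc_last]; exact hy)
        rw [hrψp, (swap_env v xs a y).1, (swap_env v xs a y).2] at h₂
        exact (hM₀ M v (Fin.snoc xs y)).1 h₂
      · intro hδ
        rw [realize_ballV]
        intro a ha
        rw [BoundedFormula.realize_imp]
        intro h₁
        have e₁ := hAt M v (Fin.snoc xs a) h₁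
        rw [comp1_map, elim_snoc_last] at e₁
        rw [realize_ballV]
        rw [realize_ballT] at hδ
        intro y hy
        rw [elim_snoc_last] at hy
        rw [hrψm, (swap_env v xs a y).1, (swap_env v xs a y).2]
        refine (hM₀ M v (Fin.snoc xs y)).2 (hδ y ?_)
        rw [e₁] at hy
        exact hy
    · intro v xs
      obtain ⟨g, hg⟩ : ∃ g : ℕ → ℕ, ∀ y, ∀ B ≥ g y,
          (φ₀.Realize v (Fin.snoc xs y) → φ₀p.Realize (fun o => o.elim B v) (Fin.snoc xs y)) ∧
          (φ₀m.Realize (fun o => o.elim B v) (Fin.snoc xs y) → φ₀.Realize v (Fin.snoc xs y)) := by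
        choose g hg using fun y => hN₀ v (Fin.snoc xs y)
        exact ⟨g, hg⟩
      set tval := t.realize (Sum.elim v xs) with htval
      refine ⟨tmax t (Sum.elim v xs) ⊔ (Finset.range (tval + 1)).sup g, fun B hB => ?_⟩
      have hv : (fun a => (fun o => (o : Option α).elim B v) (some a)) = v := rfl
      have htB : tmax t (Sum.elim v xs) ≤ B := le_trans le_sup_left hB
      have hyB : ∀ y, y ≤ tval → g y ≤ B := fun y hy =>
        le_trans (le_trans (Finset.le_sup (f := g) (Finset.mem_range.2 (Nat.lt_succ_of_le hy)))
          le_sup_right) hB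
      constructor
      · intro hδ
        rw [realize_ballT] at hδ
        rw [realize_bexV]
        refine ⟨tval, ?_, ?_⟩
        · rw [leM_nat]
          exact le_trans (realize_le_tmax _ _) htB
        rw [BoundedFormula.realize_inf]
        refine ⟨?_, ?_⟩
        · refine hBt _ _ ?_ ?_ <;> rw [comp1_map, hv]
          · exact htB
          · rw [elim_snoc_last]
        · rw [realize_ballV]
          intro y hy
          rw [elim_snoc_last, leM_nat] at hy
          rw [hrψp, (swap_env _ xs tval y).1, (swap_env _ xs tval y).2]
          exact (hg y B (hyB y hy)).1 (hδ y (by rw [leM_nat]; exact hy))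
      · intro hr
        rw [realize_ballV] at hr
        have hr := hr tval (by rw [leM_nat]; exact le_trans (realize_le_tmax _ _) htB)
        rw [BoundedFormula.realize_imp] at hr
        have hr := hr (by
          refine hBt _ _ ?_ ?_ <;> rw [comp1_map, hv]
          · exact htB
          · rw [elim_snoc_last])
        rw [realize_ballV] at hr
        rw [realize_ballT]
        intro y hy
        rw [leM_nat] at hy
        have h := hr y (by rw [elim_snoc_last, leM_nat]; exact hy)
        rw [hrψm, (swap_env _ xs tval y).1, (swap_env _ xs tval y).2] at h
        exact (hg y B (hyB y hy)).2 h

  | @bex k t φ₀ h₀ ih =>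
    obtain ⟨φ₀p, φ₀m, hp₀p, hp₀m, hM₀, hN₀⟩ := ih
    obtain ⟨ψp, hpψp, hrψp⟩ := pure_rename hp₀p ρswap
    obtain ⟨ψm, hpψm, hrψm⟩ := pure_rename hp₀m ρswap
    obtain ⟨φt, hpt, hAt, hBt⟩ := graph t (fun z => lift1 (Sum.map some id z))
      (Sum.inl none) (Sum.inr (Fin.last k))
    refine ⟨bexV (Sum.inl none) (φt ⊓ bexV (Sum.inr (Fin.last k)) ψp),
      ballV (Sum.inl none) (φt ⟹ bexV (Sum.inr (Fin.last k)) ψm),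
      IsPureDelta0.bexV _ (hpt.inf (IsPureDelta0.bexV _ hpψp)),
      IsPureDelta0.ballV _ (hpt.imp (IsPureDelta0.bexV _ hpψm)), ?_, ?_⟩
    · intro M _ v xs
      constructor
      · intro hr
        rw [realize_bexV] at hr
        obtain ⟨a, -, hr⟩ := hr
        rw [BoundedFormula.realize_inf] at hr
        obtain ⟨h₁, h₂⟩ := hr
        have e₁ := hAt M v (Fin.snoc xs a) h₁
        rw [comp1_map, elim_snoc_last] at e₁
        rw [realize_bexV] at h₂
        rw [realize_bexT]
        obtain ⟨y, hy, h₂⟩ := h₂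
        rw [elim_snoc_last] at hy
        rw [hrψp, (swap_env v xs a y).1, (swap_env v xs a y).2] at h₂
        refine ⟨y, ?_, (hM₀ M v (Fin.snoc xs y)).1 h₂⟩
        rw [← e₁]
        exact hy
      · intro hδ
        rw [realize_ballV]
        intro a ha
        rw [BoundedFormula.realize_imp]
        intro h₁
        have e₁ := hAt M v (Fin.snoc xs a) h₁
        rw [comp1_map, elim_snoc_last] at e₁
        rw [realize_bexV]
        rw [realize_bexT] at hδ
        obtain ⟨y, hy, h₀⟩ := hδ
        refine ⟨y, ?_, ?_⟩
        · rw [elim_snoc_last, e₁]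
          exact hy
        · rw [hrψm, (swap_env v xs a y).1, (swap_env v xs a y).2]
          exact (hM₀ M v (Fin.snoc xs y)).2 h₀
    · intro v xs
      obtain ⟨g, hg⟩ : ∃ g : ℕ → ℕ, ∀ y, ∀ B ≥ g y,
          (φ₀.Realize v (Fin.snoc xs y) → φ₀p.Realize (fun o => o.elim B v) (Fin.snoc xs y)) ∧
          (φ₀m.Realize (fun o => o.elim B v) (Fin.snoc xs y) → φ₀.Realize v (Fin.snoc xs y)) := by
        choose g hg using fun y => hN₀ v (Fin.snoc xs y)
        exact ⟨g, hg⟩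
      set tval := t.realize (Sum.elim v xs) with htval
      refine ⟨tmax t (Sum.elim v xs) ⊔ (Finset.range (tval + 1)).sup g, fun B hB => ?_⟩
      have hv : (fun a => (fun o => (o : Option α).elim B v) (some a)) = v := rfl
      have htB : tmax t (Sum.elim v xs) ≤ B := le_trans le_sup_left hB
      have hyB : ∀ y, y ≤ tval → g y ≤ B := fun y hy =>
        le_trans (le_trans (Finset.le_sup (f := g) (Finset.mem_range.2 (Nat.lt_succ_of_le hy)))
          le_sup_right) hB
      constructor
      · intro hδ
        rw [realize_bexT] at hδ
        rw [realize_bexV]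
        refine ⟨tval, ?_, ?_⟩
        · rw [leM_nat]
          exact le_trans (realize_le_tmax _ _) htB
        rw [BoundedFormula.realize_inf]
        refine ⟨?_, ?_⟩
        · refine hBt _ _ ?_ ?_ <;> rw [comp1_map, hv]
          · exact htB
          · rw [elim_snoc_last]
        · rw [realize_bexV]
          obtain ⟨y, hy, h₀⟩ := hδ
          rw [leM_nat] at hy
          refine ⟨y, by rw [elim_snoc_last, leM_nat]; exact hy, ?_⟩
          rw [hrψp, (swap_env _ xs tval y).1, (swap_env _ xs tval y).2]
          exact (hg y B (hyB y hy)).1 h₀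
      · intro hr
        rw [realize_ballV] at hr
        have hr := hr tval (by rw [leM_nat]; exact le_trans (realize_le_tmax _ _) htB)
        rw [BoundedFormula.realize_imp] at hr
        have hr := hr (by
          refine hBt _ _ ?_ ?_ <;> rw [comp1_map, hv]
          · exact htB
          · rw [elim_snoc_last])
        rw [realize_bexV] at hr
        rw [realize_bexT]
        obtain ⟨y, hy, h⟩ := hr
        rw [elim_snoc_last, leM_nat] at hy
        rw [hrψm, (swap_env _ xs tval y).1, (swap_env _ xs tval y).2] at h
        exact ⟨y, by rw [leM_nat]; exact hy, (hg y B (hyB y hy)).2 h⟩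


end Statement0Aux

namespace Statement0Aux

/-- Key existence lemma: every Σ₁ formula has a pure Σ₁ equivalent (over ℕ)
that logically implies it. -/
lemma sigma1_key {α : Type} (φ : La.Formula α) (h : IsSigma1 φ) :
    ∃ ψ : La.Formula α, IsPureSigma1 ψ ∧
      (∀ v : α → ℕ, φ.Realize v ↔ ψ.Realize v) ∧
      (∀ (M : Type) [La.Structure M] [Nonempty M] (v : α → M),
        ψ.Realize v → φ.Realize v) := by
  obtain ⟨m, δ, hδ, rfl⟩ := h
  obtain ⟨φp, φm, hpp, hpm, hM, hN⟩ := delta0_main hδ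
  obtain ⟨ψδ, hpψ, hrψ⟩ := pure_rename hpp
    (fun z : Option α ⊕ Fin m => match z with
      | Sum.inl (some a) => Sum.inl a
      | Sum.inl none => Sum.inr (Fin.last m)
      | Sum.inr k => (Sum.inr (Fin.castSucc k) : α ⊕ Fin (m + 1)))
  have key : ∀ (M : Type) [La.Structure M] (v : α → M),
      Formula.Realize (ψδ.exs) v → Formula.Realize (δ.exs) v := by
    intro M _ v hr
    rw [BoundedFormula.realize_exs] at hr ⊢
    obtain ⟨xs, hxs⟩ := hr
    rw [hrψ] at hxs
    refine ⟨fun i => Sum.elim v xs (Sum.inr (Fin.castSucc i)), ?_⟩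
    exact (hM M _ _).1 hxs
  refine ⟨ψδ.exs, ⟨m + 1, ψδ, hpψ, rfl⟩, ?_, ?_⟩
  · intro v
    constructor
    · intro hr
      rw [BoundedFormula.realize_exs] at hr ⊢
      obtain ⟨xs, hxs⟩ := hr
      obtain ⟨B₀, hB⟩ := hN v xs
      refine ⟨Fin.snoc xs B₀, ?_⟩
      rw [hrψ]
      have hv1 : (fun a : Option α => Sum.elim v (Fin.snoc xs B₀)
          ((match (Sum.inl a : Option α ⊕ Fin m) with
            | Sum.inl (some a) => Sum.inl a
            | Sum.inl none => Sum.inr (Fin.last m)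
            | Sum.inr k => (Sum.inr (Fin.castSucc k) : α ⊕ Fin (m + 1)))))
          = (fun o : Option α => o.elim B₀ v) := by
        funext o
        cases o with
        | none => show Sum.elim v (Fin.snoc xs B₀) (Sum.inr (Fin.last m)) = B₀; simp
        | some a => rfl
      have hv2 : (fun i : Fin m => Sum.elim v (Fin.snoc xs B₀)
          ((match (Sum.inr i : Option α ⊕ Fin m) with
            | Sum.inl (some a) => Sum.inl a
            | Sum.inl none => Sum.inr (Fin.last m)
            | Sum.inr k => (Sum.inr (Fin.castSucc k) : α ⊕ Fin (m + 1))))) = xs := by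
        funext i
        show Sum.elim v (Fin.snoc xs B₀) (Sum.inr (Fin.castSucc i)) = xs i
        simp [Fin.snoc_castSucc]
      rw [hv1, hv2]
      exact (hB B₀ le_rfl).1 hxs
    · exact key ℕ v
  · intro M _ _ v
    exact key M v

end Statement0Aux
/-- every Σ₁ formula can be effectively transformed into a pure Σ₁ formula
that is equivalent to it over ℕ and logically implies it in every structure. -/
theorem statement0 :
    ∃ F : ∀ i : ℕ, La.Formula (Fin i) → La.Formula (Fin i),
      ∀ (i : ℕ) (φ : La.Formula (Fin i)), IsSigma1 φ →
        IsPureSigma1 (F i φ) ∧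
        (∀ v : Fin i → ℕ, Formula.Realize φ v ↔ Formula.Realize (F i φ) v) ∧
        (∀ (M : Type) [La.Structure M] [Nonempty M] (v : Fin i → M),
          Formula.Realize (F i φ) v → Formula.Realize φ v) := by
  classical
  refine ⟨fun i φ => if h : IsSigma1 φ then (Statement0Aux.sigma1_key φ h).choose else φ, ?_⟩
  intro i φ h
  simp only [dif_pos h]
  exact (Statement0Aux.sigma1_key φ h).choose_spec
end

section
/- For every Σ₁ arithmetic sentence λ, one can effectively find a pure 1-Σ₁ sentence λ• (a sentence ∃x σ₀(x) with σ₀ pure Δ₀ and a single existential quantifier) such that ℕ ⊨ λ ↔ λ• and λ• → λ is logically valid. -/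
open FirstOrder FirstOrder.Language

section Helpers

open BoundedFormula

variable {M : Type} [La.Structure M]

@[simp] lemma realize_zeroT {β : Type} (v : β → M) :
    (zeroT : La.Term β).realize v = Structure.funMap (L := La) (M := M) AFunc.zero ![] := by
  simp only [zeroT, Term.realize_func]
  erw [Term.realize_func]; congr; funext i; exact i.elim0

@[simp] lemma realize_succT {β : Type} (v : β → M) (t : La.Term β) :
    (succT t : La.Term β).realize v = Structure.funMap (L := La) (M := M) AFunc.succ ![t.realize v] := by
  simp only [succT, Term.realize_func]
  erw [Term.realize_func]; congr; funext i; fin_cases i <;> rfl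

@[simp] lemma realize_addT {β : Type} (v : β → M) (t u : La.Term β) :
    (addT t u : La.Term β).realize v = Structure.funMap (L := La) (M := M) AFunc.add ![t.realize v, u.realize v] := by
  simp only [addT, Term.realize_func]
  erw [Term.realize_func]; congr; funext i; fin_cases i <;> rfl

@[simp] lemma realize_mulT {β : Type} (v : β → M) (t u : La.Term β) :
    (mulT t u : La.Term β).realize v = Structure.funMap (L := La) (M := M) AFunc.mul ![t.realize v, u.realize v] := by
  simp only [mulT, Term.realize_func]
  erw [Term.realize_func]; congr; funext i; fin_cases i <;> rfl

@[simp] lemma realize_leF {α : Type} {n : ℕ} (v : α → M) (xs : Fin n → M)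
    (t u : La.Term (α ⊕ Fin n)) :
    (leF t u).Realize v xs ↔
      Structure.RelMap (L := La) (M := M) ARel.le ![t.realize (Sum.elim v xs), u.realize (Sum.elim v xs)] := by
  rw [leF]; erw [BoundedFormula.realize_rel]
  have : (fun i => Term.realize (Sum.elim v xs) (![t, u] i)) =
      ![t.realize (Sum.elim v xs), u.realize (Sum.elim v xs)] := by
    funext i; fin_cases i <;> rfl
  rw [this]

@[simp] lemma funMap_zero (v : Fin 0 → ℕ) : Structure.funMap (L := La) (M := ℕ) AFunc.zero v = 0 := rfl
@[simp] lemma funMap_succ (v : Fin 1 → ℕ) :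
    Structure.funMap (L := La) (M := ℕ) AFunc.succ v = v 0 + 1 := rfl
@[simp] lemma funMap_add (v : Fin 2 → ℕ) :
    Structure.funMap (L := La) (M := ℕ) AFunc.add v = v 0 + v 1 := rfl
@[simp] lemma funMap_mul (v : Fin 2 → ℕ) :
    Structure.funMap (L := La) (M := ℕ) AFunc.mul v = v 0 * v 1 := rfl
@[simp] lemma relMap_le (v : Fin 2 → ℕ) :
    Structure.RelMap (L := La) (M := ℕ) ARel.le v ↔ v 0 ≤ v 1 := Iff.rfl

@[simp] lemma realize_liftT {α : Type} {n : ℕ} (v : α → M) (xs : Fin (n+1) → M)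
    (t : La.Term (α ⊕ Fin n)) :
    (liftT t).realize (Sum.elim v xs) = t.realize (Sum.elim v (xs ∘ Fin.castSucc)) := by
  rw [liftT, Term.realize_relabel]
  congr 1; funext i; rcases i with i | i <;> rfl

lemma IsPureDelta0.not_s1 {α : Type} {n : ℕ} {φ : La.BoundedFormula α n}
    (h : IsPureDelta0 φ) : IsPureDelta0 (∼φ) := h.imp .falsum

lemma IsPureDelta0.inf_s1 {α : Type} {n : ℕ} {φ ψ : La.BoundedFormula α n}
    (h : IsPureDelta0 φ) (h' : IsPureDelta0 ψ) : IsPureDelta0 (φ ⊓ ψ) :=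
  (h.imp h'.not_s1).not_s1

end Helpers

section PureVal

open BoundedFormula

lemma fin1_eta {γ : Type*} (f : Fin 1 → γ) : f = ![f 0] := by
  funext i; fin_cases i; rfl

lemma fin2_eta {γ : Type*} (f : Fin 2 → γ) : f = ![f 0, f 1] := by
  funext i; fin_cases i <;> rfl

@[simp] lemma realize_vr {M : Type} [La.Structure M] {α : Type} {n : ℕ} (e : α ⊕ Fin n → M)
    (i : Fin n) : (vr (α := α) i).realize e = e (Sum.inr i) := rfl

@[simp] lemma snoc_zero'' {k : ℕ} {γ : Type*} (xs : Fin (k+1) → γ) (a : γ) :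
    (Fin.snoc xs a : Fin (k+2) → γ) 0 = xs 0 := by
  rw [show (0 : Fin (k+2)) = Fin.castSucc 0 by simp, Fin.snoc_castSucc]

/-- Purification of terms: a pure Δ₀ formula expressing `x_w = t`. -/
lemma pureValEx {α : Type} {n : ℕ} (t : La.Term (α ⊕ Fin n)) (c : ℕ)
    (ρ : Fin n → Fin (c+1)) (w : Fin (c+1)) :
    ∃ χ : La.BoundedFormula α (c+1), IsPureDelta0 χ ∧
      (∀ (M : Type) [La.Structure M] (V : α → M) (xs : Fin (c+1) → M),
          χ.Realize V xs → xs w = t.realize (Sum.elim V (xs ∘ ρ))) ∧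
      (∀ (V : α → ℕ) (v : Fin n → ℕ), ∃ x₀ : ℕ, ∀ xs : Fin (c+1) → ℕ,
          (∀ i, xs (ρ i) = v i) → x₀ ≤ xs 0 → xs w = t.realize (Sum.elim V v) →
          χ.Realize V xs) := by
  induction t generalizing c with
  | var s =>
    refine ⟨Term.var (Sum.map id ρ s) =' Term.var (Sum.inr w), .eq _ _, ?_, ?_⟩
    · intro M _ V xs h
      rw [BoundedFormula.realize_bdEqual] at h
      rcases s with a | i <;> simpa using h.symm
    · intro V v
      refine ⟨0, fun xs hv _ hw => ?_⟩
      rw [BoundedFormula.realize_bdEqual]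
      rcases s with a | i <;> simp_all
  | func f ts ih =>
    cases f with
    | zero =>
      refine ⟨zeroT =' Term.var (Sum.inr w), .zeroEq _, ?_, ?_⟩
      · intro M _ V xs h
        rw [BoundedFormula.realize_bdEqual] at h
        simp only [Term.realize_var, Sum.elim_inr, realize_zeroT] at h
        rw [← h]; erw [Term.realize_func]
        congr 1
        exact Subsingleton.elim _ _
      · intro V v
        refine ⟨0, fun xs hv _ hw => ?_⟩
        rw [BoundedFormula.realize_bdEqual]
        simp only [Term.realize_var, Sum.elim_inr, realize_zeroT]
        rw [hw]; erw [Term.realize_func]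
        congr 1
        exact Subsingleton.elim _ _
    | succ =>
      obtain ⟨χ₁, hp₁, hS₁, hN₁⟩ := ih 0 (c+1) (Fin.castSucc ∘ ρ) (Fin.last (c+1))
      refine ⟨∃' (leF (vr (Fin.last (c+1)))
            (Term.var (Sum.map id Fin.castSucc (Sum.inr (0 : Fin (c+1))))) ⊓
          (χ₁ ⊓ (succT (vr (Fin.last (c+1))) =' vr w.castSucc))),
        .bex _ (hp₁.inf_s1 (.succEq _ _)), ?_, ?_⟩
      · intro M _ V xs h
        rw [BoundedFormula.realize_ex] at h
        obtain ⟨a, ha⟩ := h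
        rw [BoundedFormula.realize_inf, BoundedFormula.realize_inf] at ha
        obtain ⟨-, h₁, h₂⟩ := ha
        have henv : (Fin.snoc xs a : Fin (c+2) → M) ∘ (Fin.castSucc ∘ ρ) = xs ∘ ρ := by
          funext i; simp [Function.comp]
        have e₁ : a = (ts 0).realize (Sum.elim V (xs ∘ ρ)) := by
          have := hS₁ M V _ h₁
          rw [henv] at this
          simpa using this
        rw [BoundedFormula.realize_bdEqual] at h₂
        simp only [realize_succT, realize_vr, Term.realize_var, Sum.elim_inr,
          Fin.snoc_last, Fin.snoc_castSucc] at h₂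
        erw [Term.realize_func]; rw [← h₂]
        congr 1
        funext i
        fin_cases i
        simpa using e₁
      · intro V v
        obtain ⟨x₁, hx₁⟩ := hN₁ V v
        refine ⟨max x₁ ((ts 0).realize (Sum.elim V v)), fun xs hv hx hw => ?_⟩
        rw [BoundedFormula.realize_ex]
        refine ⟨(ts 0).realize (Sum.elim V v), ?_⟩
        rw [BoundedFormula.realize_inf, BoundedFormula.realize_inf]
        refine ⟨?_, ?_, ?_⟩
        · simp only [realize_leF, Term.realize_var, Sum.elim_inr, Sum.map_inr,
            Fin.snoc_last, Fin.snoc_castSucc, Fin.castSucc_zero, relMap_le,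
            Matrix.cons_val_zero, Matrix.cons_val_one, Matrix.head_cons, realize_vr,
            snoc_zero'']
          exact le_trans (le_max_right _ _) hx
        · apply hx₁
          · intro i; simp [Function.comp, hv i]
          · rw [snoc_zero'']; exact le_trans (le_max_left _ _) hx
          · simp
        · rw [BoundedFormula.realize_bdEqual]
          simp only [realize_succT, realize_vr, Term.realize_var, Sum.elim_inr,
            Fin.snoc_last, Fin.snoc_castSucc, funMap_succ, Matrix.cons_val_zero]
          rw [hw]; erw [Term.realize_func]
          simp
    | add =>
      obtain ⟨χ₁, hp₁, hS₁, hN₁⟩ :=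
        ih 0 (c+2) (Fin.castSucc ∘ Fin.castSucc ∘ ρ) (Fin.castSucc (Fin.last (c+1)))
      obtain ⟨χ₂, hp₂, hS₂, hN₂⟩ :=
        ih 1 (c+2) (Fin.castSucc ∘ Fin.castSucc ∘ ρ) (Fin.last (c+2))
      refine ⟨∃' (leF (vr (Fin.last (c+1)))
            (Term.var (Sum.map id Fin.castSucc (Sum.inr (0 : Fin (c+1))))) ⊓
          ∃' (leF (vr (Fin.last (c+2)))
              (Term.var (Sum.map id Fin.castSucc (Sum.inr (0 : Fin (c+2))))) ⊓
            (χ₁ ⊓ (χ₂ ⊓ (addT (vr (Fin.castSucc (Fin.last (c+1)))) (vr (Fin.last (c+2))) ='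
              vr ((w.castSucc).castSucc)))))),
        .bex _ (.bex _ (hp₁.inf_s1 (hp₂.inf_s1 (.addEq _ _ _)))), ?_, ?_⟩
      · intro M _ V xs h
        rw [BoundedFormula.realize_ex] at h
        obtain ⟨a, ha⟩ := h
        rw [BoundedFormula.realize_inf, BoundedFormula.realize_ex] at ha
        obtain ⟨-, b, hb⟩ := ha
        rw [BoundedFormula.realize_inf, BoundedFormula.realize_inf,
          BoundedFormula.realize_inf] at hb
        obtain ⟨-, h₁, h₂, h₃⟩ := hb
        have henv : (Fin.snoc (Fin.snoc xs a) b : Fin (c+3) → M) ∘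
            (Fin.castSucc ∘ Fin.castSucc ∘ ρ) = xs ∘ ρ := by
          funext i; simp [Function.comp]
        have e₁ : a = (ts 0).realize (Sum.elim V (xs ∘ ρ)) := by
          have := hS₁ M V _ h₁
          rw [henv] at this
          simpa using this
        have e₂ : b = (ts 1).realize (Sum.elim V (xs ∘ ρ)) := by
          have := hS₂ M V _ h₂
          rw [henv] at this
          simpa using this
        rw [BoundedFormula.realize_bdEqual] at h₃
        simp only [realize_addT, realize_vr, Term.realize_var, Sum.elim_inr,
          Fin.snoc_last, Fin.snoc_castSucc] at h₃
        erw [Term.realize_func]; rw [← h₃]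
        congr 1
        funext i
        fin_cases i
        · simpa using e₁
        · simpa using e₂
      · intro V v
        obtain ⟨x₁, hx₁⟩ := hN₁ V v
        obtain ⟨x₂, hx₂⟩ := hN₂ V v
        refine ⟨max (max x₁ x₂)
          (max ((ts 0).realize (Sum.elim V v)) ((ts 1).realize (Sum.elim V v))),
          fun xs hv hx hw => ?_⟩
        rw [BoundedFormula.realize_ex]
        refine ⟨(ts 0).realize (Sum.elim V v), ?_⟩
        rw [BoundedFormula.realize_inf, BoundedFormula.realize_ex]
        refine ⟨?_, (ts 1).realize (Sum.elim V v), ?_⟩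
        · simp only [realize_leF, Term.realize_var, Sum.elim_inr, Sum.map_inr,
            Fin.snoc_last, Fin.snoc_castSucc, Fin.castSucc_zero, relMap_le,
            Matrix.cons_val_zero, Matrix.cons_val_one, Matrix.head_cons, realize_vr,
            snoc_zero'']
          exact le_trans (le_trans (le_max_left _ _) (le_max_right _ _)) hx
        rw [BoundedFormula.realize_inf, BoundedFormula.realize_inf,
          BoundedFormula.realize_inf]
        refine ⟨?_, ?_, ?_, ?_⟩
        · simp only [realize_leF, Term.realize_var, Sum.elim_inr, Sum.map_inr,
            Fin.snoc_last, Fin.snoc_castSucc, Fin.castSucc_zero, relMap_le,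
            Matrix.cons_val_zero, Matrix.cons_val_one, Matrix.head_cons, realize_vr,
            snoc_zero'']
          exact le_trans (le_trans (le_max_right _ _) (le_max_right _ _)) hx
        · apply hx₁
          · intro i; simp [Function.comp, hv i]
          · rw [snoc_zero'', snoc_zero'']; exact le_trans (le_trans (le_max_left _ _) (le_max_left _ _)) hx
          · simp
        · apply hx₂
          · intro i; simp [Function.comp, hv i]
          · rw [snoc_zero'', snoc_zero'']; exact le_trans (le_trans (le_max_right _ _) (le_max_left _ _)) hx
          · simp
        · rw [BoundedFormula.realize_bdEqual]
          simp only [realize_addT, realize_vr, Term.realize_var, Sum.elim_inr,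
            Fin.snoc_last, Fin.snoc_castSucc, funMap_add, Matrix.cons_val_zero,
            Matrix.cons_val_one, Matrix.head_cons]
          rw [hw]; erw [Term.realize_func]
          simp
    | mul =>
      obtain ⟨χ₁, hp₁, hS₁, hN₁⟩ :=
        ih 0 (c+2) (Fin.castSucc ∘ Fin.castSucc ∘ ρ) (Fin.castSucc (Fin.last (c+1)))
      obtain ⟨χ₂, hp₂, hS₂, hN₂⟩ :=
        ih 1 (c+2) (Fin.castSucc ∘ Fin.castSucc ∘ ρ) (Fin.last (c+2))
      refine ⟨∃' (leF (vr (Fin.last (c+1)))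
            (Term.var (Sum.map id Fin.castSucc (Sum.inr (0 : Fin (c+1))))) ⊓
          ∃' (leF (vr (Fin.last (c+2)))
              (Term.var (Sum.map id Fin.castSucc (Sum.inr (0 : Fin (c+2))))) ⊓
            (χ₁ ⊓ (χ₂ ⊓ (mulT (vr (Fin.castSucc (Fin.last (c+1)))) (vr (Fin.last (c+2))) ='
              vr ((w.castSucc).castSucc)))))),
        .bex _ (.bex _ (hp₁.inf_s1 (hp₂.inf_s1 (.mulEq _ _ _)))), ?_, ?_⟩
      · intro M _ V xs h
        rw [BoundedFormula.realize_ex] at h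
        obtain ⟨a, ha⟩ := h
        rw [BoundedFormula.realize_inf, BoundedFormula.realize_ex] at ha
        obtain ⟨-, b, hb⟩ := ha
        rw [BoundedFormula.realize_inf, BoundedFormula.realize_inf,
          BoundedFormula.realize_inf] at hb
        obtain ⟨-, h₁, h₂, h₃⟩ := hb
        have henv : (Fin.snoc (Fin.snoc xs a) b : Fin (c+3) → M) ∘
            (Fin.castSucc ∘ Fin.castSucc ∘ ρ) = xs ∘ ρ := by
          funext i; simp [Function.comp]
        have e₁ : a = (ts 0).realize (Sum.elim V (xs ∘ ρ)) := by
          have := hS₁ M V _ h₁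
          rw [henv] at this
          simpa using this
        have e₂ : b = (ts 1).realize (Sum.elim V (xs ∘ ρ)) := by
          have := hS₂ M V _ h₂
          rw [henv] at this
          simpa using this
        rw [BoundedFormula.realize_bdEqual] at h₃
        simp only [realize_mulT, realize_vr, Term.realize_var, Sum.elim_inr,
          Fin.snoc_last, Fin.snoc_castSucc] at h₃
        erw [Term.realize_func]; rw [← h₃]
        congr 1
        funext i
        fin_cases i
        · simpa using e₁
        · simpa using e₂
      · intro V v
        obtain ⟨x₁, hx₁⟩ := hN₁ V v
        obtain ⟨x₂, hx₂⟩ := hN₂ V v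
        refine ⟨max (max x₁ x₂)
          (max ((ts 0).realize (Sum.elim V v)) ((ts 1).realize (Sum.elim V v))),
          fun xs hv hx hw => ?_⟩
        rw [BoundedFormula.realize_ex]
        refine ⟨(ts 0).realize (Sum.elim V v), ?_⟩
        rw [BoundedFormula.realize_inf, BoundedFormula.realize_ex]
        refine ⟨?_, (ts 1).realize (Sum.elim V v), ?_⟩
        · simp only [realize_leF, Term.realize_var, Sum.elim_inr, Sum.map_inr,
            Fin.snoc_last, Fin.snoc_castSucc, Fin.castSucc_zero, relMap_le,
            Matrix.cons_val_zero, Matrix.cons_val_one, Matrix.head_cons, realize_vr,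
            snoc_zero'']
          exact le_trans (le_trans (le_max_left _ _) (le_max_right _ _)) hx
        rw [BoundedFormula.realize_inf, BoundedFormula.realize_inf,
          BoundedFormula.realize_inf]
        refine ⟨?_, ?_, ?_, ?_⟩
        · simp only [realize_leF, Term.realize_var, Sum.elim_inr, Sum.map_inr,
            Fin.snoc_last, Fin.snoc_castSucc, Fin.castSucc_zero, relMap_le,
            Matrix.cons_val_zero, Matrix.cons_val_one, Matrix.head_cons, realize_vr,
            snoc_zero'']
          exact le_trans (le_trans (le_max_right _ _) (le_max_right _ _)) hx
        · apply hx₁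
          · intro i; simp [Function.comp, hv i]
          · rw [snoc_zero'', snoc_zero'']; exact le_trans (le_trans (le_max_left _ _) (le_max_left _ _)) hx
          · simp
        · apply hx₂
          · intro i; simp [Function.comp, hv i]
          · rw [snoc_zero'', snoc_zero'']; exact le_trans (le_trans (le_max_right _ _) (le_max_left _ _)) hx
          · simp
        · rw [BoundedFormula.realize_bdEqual]
          simp only [realize_mulT, realize_vr, Term.realize_var, Sum.elim_inr,
            Fin.snoc_last, Fin.snoc_castSucc, funMap_mul, Matrix.cons_val_zero,
            Matrix.cons_val_one, Matrix.head_cons]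
          rw [hw]; erw [Term.realize_func]
          simp

end PureVal

section MainLemma

open BoundedFormula

/-- The extension of a variable renaming used when passing under a bounded quantifier. -/
def extRho {n c : ℕ} (ρ : Fin n → Fin (c+1)) : Fin (n+1) → Fin (c+3) :=
  Fin.snoc (fun j => ((ρ j).castSucc).castSucc) (Fin.last (c+2))

lemma comp_snoc_castSucc {γ : Type*} {k n : ℕ} (xs : Fin (k+1) → γ) (a : γ)
    (ρ : Fin n → Fin (k+1)) :
    (Fin.snoc xs a : Fin (k+2) → γ) ∘ (Fin.castSucc ∘ ρ) = xs ∘ ρ := by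
  funext i; simp [Function.comp]

lemma comp_extRho {γ : Type*} {n c : ℕ} (ρ : Fin n → Fin (c+1)) (xs : Fin (c+1) → γ)
    (a e : γ) :
    (Fin.snoc (Fin.snoc xs a) e : Fin (c+3) → γ) ∘ extRho ρ = Fin.snoc (xs ∘ ρ) e := by
  funext j
  refine Fin.lastCases ?_ (fun j₀ => ?_) j <;> simp [extRho, Function.comp]

lemma extRho_point {n c : ℕ} {ρ : Fin n → Fin (c+1)} {xs : Fin (c+1) → ℕ} {v : Fin n → ℕ}
    (hv : ∀ i, xs (ρ i) = v i) (d e : ℕ) (j : Fin (n+1)) :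
    (Fin.snoc (Fin.snoc xs d) e : Fin (c+3) → ℕ) (extRho ρ j) = (Fin.snoc v e : Fin (n+1) → ℕ) j := by
  refine Fin.lastCases ?_ (fun j₀ => ?_) j <;> simp [extRho, hv]

lemma realize_ballF {M : Type} [La.Structure M] {α : Type} {n : ℕ}
    (t : La.Term (α ⊕ Fin n)) (φ : La.BoundedFormula α (n+1)) (V : α → M) (ys : Fin n → M) :
    (∀' (leF (Term.var (Sum.inr (Fin.last n))) (liftT t) ⟹ φ)).Realize V ys ↔
      ∀ e : M, Structure.RelMap (L := La) (M := M) ARel.le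
          ![e, t.realize (Sum.elim V ys)] → φ.Realize V (Fin.snoc ys e) := by
  simp only [BoundedFormula.realize_all, BoundedFormula.realize_imp, realize_leF,
    Term.realize_var, Sum.elim_inr, Fin.snoc_last, realize_liftT, Fin.snoc_comp_castSucc]

lemma realize_bexF {M : Type} [La.Structure M] {α : Type} {n : ℕ}
    (t : La.Term (α ⊕ Fin n)) (φ : La.BoundedFormula α (n+1)) (V : α → M) (ys : Fin n → M) :
    (∃' (leF (Term.var (Sum.inr (Fin.last n))) (liftT t) ⊓ φ)).Realize V ys ↔
      ∃ e : M, Structure.RelMap (L := La) (M := M) ARel.le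
          ![e, t.realize (Sum.elim V ys)] ∧ φ.Realize V (Fin.snoc ys e) := by
  simp only [BoundedFormula.realize_ex, BoundedFormula.realize_inf, realize_leF,
    Term.realize_var, Sum.elim_inr, Fin.snoc_last, realize_liftT, Fin.snoc_comp_castSucc]

/-- Main purification lemma for Δ₀ formulas, with a positive and negative variant. -/
lemma mainDelta0 {α : Type} {n : ℕ} {δ : La.BoundedFormula α n} (h : IsDelta0 δ) :
    ∀ (c : ℕ) (ρ : Fin n → Fin (c+1)),
    ∃ p q : La.BoundedFormula α (c+1), IsPureDelta0 p ∧ IsPureDelta0 q ∧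
      (∀ (M : Type) [La.Structure M] (V : α → M) (xs : Fin (c+1) → M),
          p.Realize V xs → δ.Realize V (xs ∘ ρ)) ∧
      (∀ (M : Type) [La.Structure M] (V : α → M) (xs : Fin (c+1) → M),
          δ.Realize V (xs ∘ ρ) → q.Realize V xs) ∧
      (∀ (V : α → ℕ) (v : Fin n → ℕ), δ.Realize V v → ∃ x₀ : ℕ, ∀ xs : Fin (c+1) → ℕ,
          (∀ i, xs (ρ i) = v i) → x₀ ≤ xs 0 → p.Realize V xs) ∧
      (∀ (V : α → ℕ) (v : Fin n → ℕ), ¬δ.Realize V v → ∃ x₀ : ℕ, ∀ xs : Fin (c+1) → ℕ,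
          (∀ i, xs (ρ i) = v i) → x₀ ≤ xs 0 → ¬q.Realize V xs) := by
  induction h with
  | falsum =>
    intro c ρ
    exact ⟨⊥, ⊥, .falsum, .falsum, fun M _ V xs h => by simp at h,
      fun M _ V xs h => by simp at h, fun V v h => by simp at h,
      fun V v h => ⟨0, fun xs _ _ => by simp⟩⟩
  | equal t u =>
    intro c ρ
    obtain ⟨χt, hpt, hSt, hNt⟩ := pureValEx t (c+1) (Fin.castSucc ∘ ρ) (Fin.last (c+1))
    obtain ⟨χu, hpu, hSu, hNu⟩ := pureValEx u (c+1) (Fin.castSucc ∘ ρ) (Fin.last (c+1))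
    obtain ⟨χu2, hpu2, hSu2, hNu2⟩ :=
      pureValEx u (c+2) (Fin.castSucc ∘ Fin.castSucc ∘ ρ) (Fin.last (c+2))
    refine ⟨∃' (leF (vr (Fin.last (c+1)))
          (Term.var (Sum.map id Fin.castSucc (Sum.inr (0 : Fin (c+1))))) ⊓ (χt ⊓ χu)),
      ∀' (leF (vr (Fin.last (c+1)))
          (Term.var (Sum.map id Fin.castSucc (Sum.inr (0 : Fin (c+1))))) ⟹
        (χt ⟹ ∀' (leF (vr (Fin.last (c+2)))
            (Term.var (Sum.map id Fin.castSucc (Sum.inr (0 : Fin (c+2))))) ⟹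
          (χu2 ⟹ (vr (Fin.castSucc (Fin.last (c+1))) =' vr (Fin.last (c+2))))))),
      .bex _ (hpt.inf_s1 hpu), .ball _ (hpt.imp (.ball _ (hpu2.imp (.eq _ _)))), ?_, ?_, ?_, ?_⟩
    · intro M _ V xs h
      rw [BoundedFormula.realize_ex] at h
      obtain ⟨a, ha⟩ := h
      rw [BoundedFormula.realize_inf, BoundedFormula.realize_inf] at ha
      obtain ⟨-, h₁, h₂⟩ := ha
      have e₁ := hSt M V _ h₁
      have e₂ := hSu M V _ h₂
      rw [comp_snoc_castSucc] at e₁ e₂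
      simp only [Fin.snoc_last] at e₁ e₂
      rw [BoundedFormula.realize_bdEqual, ← e₁, ← e₂]
    · intro M _ V xs h
      rw [BoundedFormula.realize_bdEqual] at h
      rw [BoundedFormula.realize_all]
      intro a
      rw [BoundedFormula.realize_imp, BoundedFormula.realize_imp]
      intro _ h₁
      have e₁ := hSt M V _ h₁
      rw [comp_snoc_castSucc] at e₁
      simp only [Fin.snoc_last] at e₁
      rw [BoundedFormula.realize_all]
      intro b
      rw [BoundedFormula.realize_imp, BoundedFormula.realize_imp]
      intro _ h₂
      have e₂ := hSu2 M V _ h₂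
      have henv : (Fin.snoc (Fin.snoc xs a) b : Fin (c+3) → M) ∘
          (Fin.castSucc ∘ Fin.castSucc ∘ ρ) = xs ∘ ρ := by
        funext i; simp [Function.comp]
      rw [henv] at e₂
      simp only [Fin.snoc_last] at e₂
      rw [BoundedFormula.realize_bdEqual]
      simp only [realize_vr, Term.realize_var, Sum.elim_inr, Fin.snoc_last, Fin.snoc_castSucc]
      rw [e₁, e₂, h]
    · intro V v hd
      rw [BoundedFormula.realize_bdEqual] at hd
      obtain ⟨x₁, hx₁⟩ := hNt V v
      obtain ⟨x₂, hx₂⟩ := hNu V v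
      refine ⟨max (max x₁ x₂) (t.realize (Sum.elim V v)), fun xs hv hx => ?_⟩
      rw [BoundedFormula.realize_ex]
      refine ⟨t.realize (Sum.elim V v), ?_⟩
      rw [BoundedFormula.realize_inf, BoundedFormula.realize_inf]
      refine ⟨?_, ?_, ?_⟩
      · simp only [realize_leF, Term.realize_var, Sum.elim_inr, Sum.map_inr,
          Fin.snoc_last, Fin.snoc_castSucc, Fin.castSucc_zero, relMap_le,
          Matrix.cons_val_zero, Matrix.cons_val_one, Matrix.head_cons, realize_vr,
          snoc_zero'']
        exact le_trans (le_max_right _ _) hx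
      · apply hx₁
        · intro i; simp [Function.comp, hv i]
        · rw [snoc_zero'']; exact le_trans (le_trans (le_max_left _ _) (le_max_left _ _)) hx
        · simp
      · apply hx₂
        · intro i; simp [Function.comp, hv i]
        · rw [snoc_zero'']; exact le_trans (le_trans (le_max_right _ _) (le_max_left _ _)) hx
        · simp only [Fin.snoc_last]; exact hd
    · intro V v hd
      rw [BoundedFormula.realize_bdEqual] at hd
      obtain ⟨x₁, hx₁⟩ := hNt V v
      obtain ⟨x₂, hx₂⟩ := hNu2 V v
      refine ⟨max (max x₁ x₂) (max (t.realize (Sum.elim V v)) (u.realize (Sum.elim V v))),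
        fun xs hv hx hq => ?_⟩
      rw [BoundedFormula.realize_all] at hq
      have hq1 := hq (t.realize (Sum.elim V v))
      rw [BoundedFormula.realize_imp, BoundedFormula.realize_imp] at hq1
      have hq2 := hq1 (by
          simp only [realize_leF, Term.realize_var, Sum.elim_inr, Sum.map_inr,
            Fin.snoc_last, Fin.snoc_castSucc, Fin.castSucc_zero, relMap_le,
            Matrix.cons_val_zero, Matrix.cons_val_one, Matrix.head_cons, realize_vr,
            snoc_zero'']
          exact le_trans (le_trans (le_max_left _ _) (le_max_right _ _)) hx)
        (hx₁ _ (fun i => by simp [Function.comp, hv i])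
          (by rw [snoc_zero'']; exact le_trans (le_trans (le_max_left _ _) (le_max_left _ _)) hx)
          (by simp))
      rw [BoundedFormula.realize_all] at hq2
      have hq3 := hq2 (u.realize (Sum.elim V v))
      rw [BoundedFormula.realize_imp, BoundedFormula.realize_imp] at hq3
      have hq4 := hq3 (by
          simp only [realize_leF, Term.realize_var, Sum.elim_inr, Sum.map_inr,
            Fin.snoc_last, Fin.snoc_castSucc, Fin.castSucc_zero, relMap_le,
            Matrix.cons_val_zero, Matrix.cons_val_one, Matrix.head_cons, realize_vr,
            snoc_zero'']
          exact le_trans (le_trans (le_max_right _ _) (le_max_right _ _)) hx)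
        (hx₂ _ (fun i => by simp [Function.comp, hv i])
          (by rw [snoc_zero'', snoc_zero'']
              exact le_trans (le_trans (le_max_right _ _) (le_max_left _ _)) hx)
          (by simp))
      rw [BoundedFormula.realize_bdEqual] at hq4
      simp only [realize_vr, Term.realize_var, Sum.elim_inr, Fin.snoc_last,
        Fin.snoc_castSucc] at hq4
      exact hd hq4
  | le t u =>
    intro c ρ
    obtain ⟨χt, hpt, hSt, hNt⟩ :=
      pureValEx t (c+2) (Fin.castSucc ∘ Fin.castSucc ∘ ρ) (Fin.castSucc (Fin.last (c+1)))
    obtain ⟨χu, hpu, hSu, hNu⟩ :=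
      pureValEx u (c+2) (Fin.castSucc ∘ Fin.castSucc ∘ ρ) (Fin.last (c+2))
    obtain ⟨χt1, hpt1, hSt1, hNt1⟩ := pureValEx t (c+1) (Fin.castSucc ∘ ρ) (Fin.last (c+1))
    refine ⟨∃' (leF (vr (Fin.last (c+1)))
          (Term.var (Sum.map id Fin.castSucc (Sum.inr (0 : Fin (c+1))))) ⊓
        ∃' (leF (vr (Fin.last (c+2)))
            (Term.var (Sum.map id Fin.castSucc (Sum.inr (0 : Fin (c+2))))) ⊓
          (χt ⊓ (χu ⊓ leF (vr (Fin.castSucc (Fin.last (c+1)))) (vr (Fin.last (c+2))))))),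
      ∀' (leF (vr (Fin.last (c+1)))
          (Term.var (Sum.map id Fin.castSucc (Sum.inr (0 : Fin (c+1))))) ⟹
        (χt1 ⟹ ∀' (leF (vr (Fin.last (c+2)))
            (Term.var (Sum.map id Fin.castSucc (Sum.inr (0 : Fin (c+2))))) ⟹
          (χu ⟹ leF (vr (Fin.castSucc (Fin.last (c+1)))) (vr (Fin.last (c+2))))))),
      .bex _ (.bex _ (hpt.inf_s1 (hpu.inf_s1 (.le _ _)))),
      .ball _ (hpt1.imp (.ball _ (hpu.imp (.le _ _)))), ?_, ?_, ?_, ?_⟩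
    · intro M _ V xs h
      rw [BoundedFormula.realize_ex] at h
      obtain ⟨a, ha⟩ := h
      rw [BoundedFormula.realize_inf, BoundedFormula.realize_ex] at ha
      obtain ⟨-, b, hb⟩ := ha
      rw [BoundedFormula.realize_inf, BoundedFormula.realize_inf,
        BoundedFormula.realize_inf] at hb
      obtain ⟨-, h₁, h₂, h₃⟩ := hb
      have henv : (Fin.snoc (Fin.snoc xs a) b : Fin (c+3) → M) ∘
          (Fin.castSucc ∘ Fin.castSucc ∘ ρ) = xs ∘ ρ := by
        funext i; simp [Function.comp]
      have e₁ := hSt M V _ h₁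
      have e₂ := hSu M V _ h₂
      rw [henv] at e₁ e₂
      simp only [Fin.snoc_last, Fin.snoc_castSucc] at e₁ e₂
      rw [realize_leF] at h₃ ⊢
      simp only [realize_vr, Term.realize_var, Sum.elim_inr, Fin.snoc_last,
        Fin.snoc_castSucc] at h₃
      rw [← e₁, ← e₂]
      exact h₃
    · intro M _ V xs h
      rw [realize_leF] at h
      rw [BoundedFormula.realize_all]
      intro a
      rw [BoundedFormula.realize_imp, BoundedFormula.realize_imp]
      intro _ h₁
      have e₁ := hSt1 M V _ h₁
      rw [comp_snoc_castSucc] at e₁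
      simp only [Fin.snoc_last] at e₁
      rw [BoundedFormula.realize_all]
      intro b
      rw [BoundedFormula.realize_imp, BoundedFormula.realize_imp]
      intro _ h₂
      have e₂ := hSu M V _ h₂
      have henv : (Fin.snoc (Fin.snoc xs a) b : Fin (c+3) → M) ∘
          (Fin.castSucc ∘ Fin.castSucc ∘ ρ) = xs ∘ ρ := by
        funext i; simp [Function.comp]
      rw [henv] at e₂
      simp only [Fin.snoc_last] at e₂
      rw [realize_leF]
      simp only [realize_vr, Term.realize_var, Sum.elim_inr, Fin.snoc_last, Fin.snoc_castSucc]
      rw [e₁, e₂]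
      exact h
    · intro V v hd
      rw [realize_leF] at hd
      simp only [relMap_le, Matrix.cons_val_zero, Matrix.cons_val_one, Matrix.head_cons] at hd
      obtain ⟨x₁, hx₁⟩ := hNt V v
      obtain ⟨x₂, hx₂⟩ := hNu V v
      refine ⟨max (max x₁ x₂) (max (t.realize (Sum.elim V v)) (u.realize (Sum.elim V v))),
        fun xs hv hx => ?_⟩
      rw [BoundedFormula.realize_ex]
      refine ⟨t.realize (Sum.elim V v), ?_⟩
      rw [BoundedFormula.realize_inf, BoundedFormula.realize_ex]
      refine ⟨?_, u.realize (Sum.elim V v), ?_⟩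
      · simp only [realize_leF, Term.realize_var, Sum.elim_inr, Sum.map_inr,
          Fin.snoc_last, Fin.snoc_castSucc, Fin.castSucc_zero, relMap_le,
          Matrix.cons_val_zero, Matrix.cons_val_one, Matrix.head_cons, realize_vr,
          snoc_zero'']
        exact le_trans (le_trans (le_max_left _ _) (le_max_right _ _)) hx
      rw [BoundedFormula.realize_inf, BoundedFormula.realize_inf, BoundedFormula.realize_inf]
      refine ⟨?_, ?_, ?_, ?_⟩
      · simp only [realize_leF, Term.realize_var, Sum.elim_inr, Sum.map_inr,
          Fin.snoc_last, Fin.snoc_castSucc, Fin.castSucc_zero, relMap_le,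
          Matrix.cons_val_zero, Matrix.cons_val_one, Matrix.head_cons, realize_vr,
          snoc_zero'']
        exact le_trans (le_trans (le_max_right _ _) (le_max_right _ _)) hx
      · apply hx₁
        · intro i; simp [Function.comp, hv i]
        · rw [snoc_zero'', snoc_zero'']
          exact le_trans (le_trans (le_max_left _ _) (le_max_left _ _)) hx
        · simp
      · apply hx₂
        · intro i; simp [Function.comp, hv i]
        · rw [snoc_zero'', snoc_zero'']
          exact le_trans (le_trans (le_max_right _ _) (le_max_left _ _)) hx
        · simp
      · rw [realize_leF]
        simp only [realize_vr, Term.realize_var, Sum.elim_inr, Fin.snoc_last,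
          Fin.snoc_castSucc, relMap_le, Matrix.cons_val_zero, Matrix.cons_val_one,
          Matrix.head_cons]
        exact hd
    · intro V v hd
      rw [realize_leF] at hd
      simp only [relMap_le, Matrix.cons_val_zero, Matrix.cons_val_one, Matrix.head_cons] at hd
      obtain ⟨x₁, hx₁⟩ := hNt1 V v
      obtain ⟨x₂, hx₂⟩ := hNu V v
      refine ⟨max (max x₁ x₂) (max (t.realize (Sum.elim V v)) (u.realize (Sum.elim V v))),
        fun xs hv hx hq => ?_⟩
      rw [BoundedFormula.realize_all] at hq
      have hq1 := hq (t.realize (Sum.elim V v))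
      rw [BoundedFormula.realize_imp, BoundedFormula.realize_imp] at hq1
      have hq2 := hq1 (by
          simp only [realize_leF, Term.realize_var, Sum.elim_inr, Sum.map_inr,
            Fin.snoc_last, Fin.snoc_castSucc, Fin.castSucc_zero, relMap_le,
            Matrix.cons_val_zero, Matrix.cons_val_one, Matrix.head_cons, realize_vr,
            snoc_zero'']
          exact le_trans (le_trans (le_max_left _ _) (le_max_right _ _)) hx)
        (hx₁ _ (fun i => by simp [Function.comp, hv i])
          (by rw [snoc_zero'']; exact le_trans (le_trans (le_max_left _ _) (le_max_left _ _)) hx)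
          (by simp))
      rw [BoundedFormula.realize_all] at hq2
      have hq3 := hq2 (u.realize (Sum.elim V v))
      rw [BoundedFormula.realize_imp, BoundedFormula.realize_imp] at hq3
      have hq4 := hq3 (by
          simp only [realize_leF, Term.realize_var, Sum.elim_inr, Sum.map_inr,
            Fin.snoc_last, Fin.snoc_castSucc, Fin.castSucc_zero, relMap_le,
            Matrix.cons_val_zero, Matrix.cons_val_one, Matrix.head_cons, realize_vr,
            snoc_zero'']
          exact le_trans (le_trans (le_max_right _ _) (le_max_right _ _)) hx)
        (hx₂ _ (fun i => by simp [Function.comp, hv i])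
          (by rw [snoc_zero'', snoc_zero'']
              exact le_trans (le_trans (le_max_right _ _) (le_max_left _ _)) hx)
          (by simp))
      rw [realize_leF] at hq4
      simp only [realize_vr, Term.realize_var, Sum.elim_inr, Fin.snoc_last,
        Fin.snoc_castSucc, relMap_le, Matrix.cons_val_zero, Matrix.cons_val_one,
        Matrix.head_cons] at hq4
      exact hd hq4
  | imp hφ hψ ihφ ihψ =>
    rename_i n' φ ψ
    intro c ρ
    obtain ⟨pφ, qφ, hpφ, hqφ, hSφp, hSφq, hNφp, hNφq⟩ := ihφ c ρ
    obtain ⟨pψ, qψ, hpψ, hqψ, hSψp, hSψq, hNψp, hNψq⟩ := ihψ c ρ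
    refine ⟨qφ ⟹ pψ, pφ ⟹ qψ, hqφ.imp hpψ, hpφ.imp hqψ, ?_, ?_, ?_, ?_⟩
    · intro M _ V xs h
      rw [BoundedFormula.realize_imp] at h ⊢
      intro hf
      exact hSψp M V xs (h (hSφq M V xs hf))
    · intro M _ V xs h
      rw [BoundedFormula.realize_imp] at h ⊢
      intro hf
      exact hSψq M V xs (h (hSφp M V xs hf))
    · intro V v hd
      rw [BoundedFormula.realize_imp] at hd
      by_cases hf : φ.Realize V v
      · obtain ⟨x₀, hx₀⟩ := hNψp V v (hd hf)
        refine ⟨x₀, fun xs hv hx => ?_⟩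
        rw [BoundedFormula.realize_imp]
        exact fun _ => hx₀ xs hv hx
      · obtain ⟨x₀, hx₀⟩ := hNφq V v hf
        refine ⟨x₀, fun xs hv hx => ?_⟩
        rw [BoundedFormula.realize_imp]
        exact fun hq => absurd hq (hx₀ xs hv hx)
    · intro V v hd
      rw [BoundedFormula.realize_imp, Classical.not_imp] at hd
      obtain ⟨hf, hg⟩ := hd
      obtain ⟨x₁, hx₁⟩ := hNφp V v hf
      obtain ⟨x₂, hx₂⟩ := hNψq V v hg
      refine ⟨max x₁ x₂, fun xs hv hx hq => ?_⟩
      rw [BoundedFormula.realize_imp] at hq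
      exact hx₂ xs hv (le_trans (le_max_right _ _) hx)
        (hq (hx₁ xs hv (le_trans (le_max_left _ _) hx)))
  | ball t hφ ihφ =>
    rename_i n' φ
    intro c ρ
    obtain ⟨pφ, qφ, hppφ, hpqφ, hSφp, hSφq, hNφp, hNφq⟩ := ihφ (c+2) (extRho ρ)
    obtain ⟨χt, hpt, hSt, hNt⟩ := pureValEx t (c+1) (Fin.castSucc ∘ ρ) (Fin.last (c+1))
    refine ⟨∃' (leF (vr (Fin.last (c+1)))
          (Term.var (Sum.map id Fin.castSucc (Sum.inr (0 : Fin (c+1))))) ⊓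
        (χt ⊓ ∀' (leF (vr (Fin.last (c+2)))
            (Term.var (Sum.map id Fin.castSucc (Sum.inr (Fin.last (c+1))))) ⟹ pφ))),
      ∀' (leF (vr (Fin.last (c+1)))
          (Term.var (Sum.map id Fin.castSucc (Sum.inr (0 : Fin (c+1))))) ⟹
        (χt ⟹ ∀' (leF (vr (Fin.last (c+2)))
            (Term.var (Sum.map id Fin.castSucc (Sum.inr (Fin.last (c+1))))) ⟹ qφ))),
      .bex _ (hpt.inf_s1 (.ball _ hppφ)), .ball _ (hpt.imp (.ball _ hpqφ)), ?_, ?_, ?_, ?_⟩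
    · intro M _ V xs h
      rw [BoundedFormula.realize_ex] at h
      obtain ⟨d, hd2⟩ := h
      rw [BoundedFormula.realize_inf, BoundedFormula.realize_inf] at hd2
      obtain ⟨-, h₁, h₂⟩ := hd2
      have e₁ := hSt M V _ h₁
      rw [comp_snoc_castSucc] at e₁
      simp only [Fin.snoc_last] at e₁
      rw [realize_ballF]
      intro e hle
      rw [BoundedFormula.realize_all] at h₂
      have h₃ := h₂ e
      rw [BoundedFormula.realize_imp] at h₃
      have h₄ := h₃ (by
        rw [realize_leF]
        simp only [realize_vr, Term.realize_var, Sum.elim_inr, Sum.map_inr,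
          Fin.snoc_last, Fin.snoc_castSucc]
        rw [e₁]
        exact hle)
      have h₅ := hSφp M V _ h₄
      rw [comp_extRho] at h₅
      exact h₅
    · intro M _ V xs h
      rw [realize_ballF] at h
      rw [BoundedFormula.realize_all]
      intro a
      rw [BoundedFormula.realize_imp, BoundedFormula.realize_imp]
      intro _ h₁
      have e₁ := hSt M V _ h₁
      rw [comp_snoc_castSucc] at e₁
      simp only [Fin.snoc_last] at e₁
      rw [BoundedFormula.realize_all]
      intro e
      rw [BoundedFormula.realize_imp]
      intro hg
      rw [realize_leF] at hg
      simp only [realize_vr, Term.realize_var, Sum.elim_inr, Sum.map_inr,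
        Fin.snoc_last, Fin.snoc_castSucc] at hg
      rw [e₁] at hg
      exact hSφq M V _ (by rw [comp_extRho]; exact h e hg)
    · intro V v hd
      rw [realize_ballF] at hd
      have key : ∀ e : ℕ, ∃ z : ℕ, e ≤ t.realize (Sum.elim V v) →
          ∀ xs' : Fin (c+3) → ℕ,
            (∀ j, xs' (extRho ρ j) = (Fin.snoc v e : Fin (n'+1) → ℕ) j) →
            z ≤ xs' 0 → pφ.Realize V xs' := by
        intro e
        by_cases he : e ≤ t.realize (Sum.elim V v)
        · obtain ⟨z, hz⟩ := hNφp V (Fin.snoc v e) (hd e (by simpa using he))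
          exact ⟨z, fun _ => hz⟩
        · exact ⟨0, fun h' => absurd h' he⟩
      choose g hg using key
      obtain ⟨x₁, hx₁⟩ := hNt V v
      refine ⟨max (max x₁ (t.realize (Sum.elim V v)))
        ((Finset.range (t.realize (Sum.elim V v) + 1)).sup g), fun xs hv hx => ?_⟩
      rw [BoundedFormula.realize_ex]
      refine ⟨t.realize (Sum.elim V v), ?_⟩
      rw [BoundedFormula.realize_inf, BoundedFormula.realize_inf]
      refine ⟨?_, ?_, ?_⟩
      · simp only [realize_leF, Term.realize_var, Sum.elim_inr, Sum.map_inr,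
            Fin.snoc_last, Fin.snoc_castSucc, Fin.castSucc_zero, relMap_le,
            Matrix.cons_val_zero, Matrix.cons_val_one, Matrix.head_cons, realize_vr,
            snoc_zero'']
        exact le_trans (le_trans (le_max_right _ _) (le_max_left _ _)) hx
      · apply hx₁
        · intro i; simp [Function.comp, hv i]
        · rw [snoc_zero'']; exact le_trans (le_trans (le_max_left _ _) (le_max_left _ _)) hx
        · simp
      · rw [BoundedFormula.realize_all]
        intro e
        rw [BoundedFormula.realize_imp]
        intro hgu
        rw [realize_leF] at hgu
        simp only [realize_vr, Term.realize_var, Sum.elim_inr, Sum.map_inr,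
          Fin.snoc_last, Fin.snoc_castSucc, relMap_le, Matrix.cons_val_zero,
          Matrix.cons_val_one, Matrix.head_cons] at hgu
        apply hg e hgu
        · intro j; exact extRho_point hv _ e j
        · rw [snoc_zero'', snoc_zero'']
          exact le_trans (le_trans (Finset.le_sup (Finset.mem_range.2 (Nat.lt_succ_of_le hgu)))
            (le_max_right _ _)) hx
    · intro V v hd
      rw [realize_ballF] at hd
      push_neg at hd
      obtain ⟨e, hle, hne⟩ := hd
      simp only [relMap_le, Matrix.cons_val_zero, Matrix.cons_val_one, Matrix.head_cons] at hle
      obtain ⟨x₁, hx₁⟩ := hNt V v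
      obtain ⟨z, hz⟩ := hNφq V (Fin.snoc v e) hne
      refine ⟨max (max x₁ (t.realize (Sum.elim V v))) z, fun xs hv hx hq => ?_⟩
      rw [BoundedFormula.realize_all] at hq
      have hq1 := hq (t.realize (Sum.elim V v))
      rw [BoundedFormula.realize_imp, BoundedFormula.realize_imp] at hq1
      have hq2 := hq1 (by
          simp only [realize_leF, Term.realize_var, Sum.elim_inr, Sum.map_inr,
            Fin.snoc_last, Fin.snoc_castSucc, Fin.castSucc_zero, relMap_le,
            Matrix.cons_val_zero, Matrix.cons_val_one, Matrix.head_cons, realize_vr,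
            snoc_zero'']
          exact le_trans (le_trans (le_max_right _ _) (le_max_left _ _)) hx)
        (hx₁ _ (fun i => by simp [Function.comp, hv i])
          (by rw [snoc_zero'']; exact le_trans (le_trans (le_max_left _ _) (le_max_left _ _)) hx)
          (by simp))
      rw [BoundedFormula.realize_all] at hq2
      have hq3 := hq2 e
      rw [BoundedFormula.realize_imp] at hq3
      have hq4 := hq3 (by
        rw [realize_leF]
        simp only [realize_vr, Term.realize_var, Sum.elim_inr, Sum.map_inr,
          Fin.snoc_last, Fin.snoc_castSucc, relMap_le, Matrix.cons_val_zero,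
          Matrix.cons_val_one, Matrix.head_cons]
        exact hle)
      exact hz _ (fun j => extRho_point hv _ e j)
        (by rw [snoc_zero'', snoc_zero'']; exact le_trans (le_max_right _ _) hx) hq4
  | bex t hφ ihφ =>
    rename_i n' φ
    intro c ρ
    obtain ⟨pφ, qφ, hppφ, hpqφ, hSφp, hSφq, hNφp, hNφq⟩ := ihφ (c+2) (extRho ρ)
    obtain ⟨χt, hpt, hSt, hNt⟩ := pureValEx t (c+1) (Fin.castSucc ∘ ρ) (Fin.last (c+1))
    refine ⟨∃' (leF (vr (Fin.last (c+1)))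
          (Term.var (Sum.map id Fin.castSucc (Sum.inr (0 : Fin (c+1))))) ⊓
        (χt ⊓ ∃' (leF (vr (Fin.last (c+2)))
            (Term.var (Sum.map id Fin.castSucc (Sum.inr (Fin.last (c+1))))) ⊓ pφ))),
      ∀' (leF (vr (Fin.last (c+1)))
          (Term.var (Sum.map id Fin.castSucc (Sum.inr (0 : Fin (c+1))))) ⟹
        (χt ⟹ ∃' (leF (vr (Fin.last (c+2)))
            (Term.var (Sum.map id Fin.castSucc (Sum.inr (Fin.last (c+1))))) ⊓ qφ))),
      .bex _ (hpt.inf_s1 (.bex _ hppφ)), .ball _ (hpt.imp (.bex _ hpqφ)), ?_, ?_, ?_, ?_⟩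
    · intro M _ V xs h
      rw [BoundedFormula.realize_ex] at h
      obtain ⟨d, hd2⟩ := h
      rw [BoundedFormula.realize_inf, BoundedFormula.realize_inf] at hd2
      obtain ⟨-, h₁, h₂⟩ := hd2
      have e₁ := hSt M V _ h₁
      rw [comp_snoc_castSucc] at e₁
      simp only [Fin.snoc_last] at e₁
      rw [BoundedFormula.realize_ex] at h₂
      obtain ⟨e, he⟩ := h₂
      rw [BoundedFormula.realize_inf] at he
      obtain ⟨hg, hpe⟩ := he
      rw [realize_leF] at hg
      simp only [realize_vr, Term.realize_var, Sum.elim_inr, Sum.map_inr,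
        Fin.snoc_last, Fin.snoc_castSucc] at hg
      rw [e₁] at hg
      rw [realize_bexF]
      refine ⟨e, hg, ?_⟩
      have h₅ := hSφp M V _ hpe
      rw [comp_extRho] at h₅
      exact h₅
    · intro M _ V xs h
      rw [realize_bexF] at h
      obtain ⟨e, hle, hφe⟩ := h
      rw [BoundedFormula.realize_all]
      intro a
      rw [BoundedFormula.realize_imp, BoundedFormula.realize_imp]
      intro _ h₁
      have e₁ := hSt M V _ h₁
      rw [comp_snoc_castSucc] at e₁
      simp only [Fin.snoc_last] at e₁
      rw [BoundedFormula.realize_ex]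
      refine ⟨e, ?_⟩
      rw [BoundedFormula.realize_inf]
      refine ⟨?_, ?_⟩
      · rw [realize_leF]
        simp only [realize_vr, Term.realize_var, Sum.elim_inr, Sum.map_inr,
          Fin.snoc_last, Fin.snoc_castSucc]
        rw [e₁]
        exact hle
      · exact hSφq M V _ (by rw [comp_extRho]; exact hφe)
    · intro V v hd
      rw [realize_bexF] at hd
      obtain ⟨e, hle, hφe⟩ := hd
      simp only [relMap_le, Matrix.cons_val_zero, Matrix.cons_val_one, Matrix.head_cons] at hle
      obtain ⟨x₁, hx₁⟩ := hNt V v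
      obtain ⟨z, hz⟩ := hNφp V (Fin.snoc v e) hφe
      refine ⟨max (max x₁ (t.realize (Sum.elim V v))) z, fun xs hv hx => ?_⟩
      rw [BoundedFormula.realize_ex]
      refine ⟨t.realize (Sum.elim V v), ?_⟩
      rw [BoundedFormula.realize_inf, BoundedFormula.realize_inf]
      refine ⟨?_, ?_, ?_⟩
      · simp only [realize_leF, Term.realize_var, Sum.elim_inr, Sum.map_inr,
            Fin.snoc_last, Fin.snoc_castSucc, Fin.castSucc_zero, relMap_le,
            Matrix.cons_val_zero, Matrix.cons_val_one, Matrix.head_cons, realize_vr,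
            snoc_zero'']
        exact le_trans (le_trans (le_max_right _ _) (le_max_left _ _)) hx
      · apply hx₁
        · intro i; simp [Function.comp, hv i]
        · rw [snoc_zero'']; exact le_trans (le_trans (le_max_left _ _) (le_max_left _ _)) hx
        · simp
      · rw [BoundedFormula.realize_ex]
        refine ⟨e, ?_⟩
        rw [BoundedFormula.realize_inf]
        refine ⟨?_, ?_⟩
        · rw [realize_leF]
          simp only [realize_vr, Term.realize_var, Sum.elim_inr, Sum.map_inr,
            Fin.snoc_last, Fin.snoc_castSucc, relMap_le, Matrix.cons_val_zero,
            Matrix.cons_val_one, Matrix.head_cons]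
          exact hle
        · apply hz
          · intro j; exact extRho_point hv _ e j
          · rw [snoc_zero'', snoc_zero'']
            exact le_trans (le_max_right _ _) hx
    · intro V v hd
      rw [realize_bexF] at hd
      push_neg at hd
      have key : ∀ e : ℕ, ∃ z : ℕ, e ≤ t.realize (Sum.elim V v) →
          ∀ xs' : Fin (c+3) → ℕ,
            (∀ j, xs' (extRho ρ j) = (Fin.snoc v e : Fin (n'+1) → ℕ) j) →
            z ≤ xs' 0 → ¬qφ.Realize V xs' := by
        intro e
        by_cases he : e ≤ t.realize (Sum.elim V v)
        · obtain ⟨z, hz⟩ := hNφq V (Fin.snoc v e) (hd e (by simpa using he))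
          exact ⟨z, fun _ => hz⟩
        · exact ⟨0, fun h' => absurd h' he⟩
      choose g hg using key
      obtain ⟨x₁, hx₁⟩ := hNt V v
      refine ⟨max (max x₁ (t.realize (Sum.elim V v)))
        ((Finset.range (t.realize (Sum.elim V v) + 1)).sup g), fun xs hv hx hq => ?_⟩
      rw [BoundedFormula.realize_all] at hq
      have hq1 := hq (t.realize (Sum.elim V v))
      rw [BoundedFormula.realize_imp, BoundedFormula.realize_imp] at hq1
      have hq2 := hq1 (by
          simp only [realize_leF, Term.realize_var, Sum.elim_inr, Sum.map_inr,
            Fin.snoc_last, Fin.snoc_castSucc, Fin.castSucc_zero, relMap_le,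
            Matrix.cons_val_zero, Matrix.cons_val_one, Matrix.head_cons, realize_vr,
            snoc_zero'']
          exact le_trans (le_trans (le_max_right _ _) (le_max_left _ _)) hx)
        (hx₁ _ (fun i => by simp [Function.comp, hv i])
          (by rw [snoc_zero'']; exact le_trans (le_trans (le_max_left _ _) (le_max_left _ _)) hx)
          (by simp))
      rw [BoundedFormula.realize_ex] at hq2
      obtain ⟨e, he2⟩ := hq2
      rw [BoundedFormula.realize_inf] at he2
      obtain ⟨hgu, hqe⟩ := he2
      rw [realize_leF] at hgu
      simp only [realize_vr, Term.realize_var, Sum.elim_inr, Sum.map_inr,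
        Fin.snoc_last, Fin.snoc_castSucc, relMap_le, Matrix.cons_val_zero,
        Matrix.cons_val_one, Matrix.head_cons] at hgu
      exact hg e hgu _ (fun j => extRho_point hv _ e j)
        (by rw [snoc_zero'', snoc_zero'']
            exact le_trans (le_trans (Finset.le_sup (Finset.mem_range.2 (Nat.lt_succ_of_le hgu)))
              (le_max_right _ _)) hx) hqe

end MainLemma

section Final

open BoundedFormula

/-- Close an existential block with bounded existentials, all bounded by variable `0`. -/
def closeBex : ∀ (k : ℕ), La.BoundedFormula Empty (k+1) → La.BoundedFormula Empty 1
  | 0, ψ => ψ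
  | k+1, ψ => closeBex k (∃' (leF (Term.var (Sum.inr (Fin.last (k+1))))
      (Term.var (Sum.map id Fin.castSucc (Sum.inr (0 : Fin (k+1))))) ⊓ ψ))

lemma closeBex_pure : ∀ (k : ℕ) (ψ : La.BoundedFormula Empty (k+1)),
    IsPureDelta0 ψ → IsPureDelta0 (closeBex k ψ)
  | 0, _, h => h
  | k+1, ψ, h => closeBex_pure k _ (.bex _ h)

lemma closeBex_sound (M : Type) [La.Structure M] :
    ∀ (k : ℕ) (ψ : La.BoundedFormula Empty (k+1)) (V : Empty → M) (xs : Fin 1 → M),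
    (closeBex k ψ).Realize V xs → ∃ zs : Fin (k+1) → M, ψ.Realize V zs
  | 0, ψ, V, xs, h => ⟨xs, h⟩
  | k+1, ψ, V, xs, h => by
    obtain ⟨zs, hz⟩ := closeBex_sound M k _ V xs h
    rw [BoundedFormula.realize_ex] at hz
    obtain ⟨a, ha⟩ := hz
    rw [BoundedFormula.realize_inf] at ha
    exact ⟨Fin.snoc zs a, ha.2⟩

lemma closeBex_complete :
    ∀ (k : ℕ) (ψ : La.BoundedFormula Empty (k+1)) (V : Empty → ℕ) (zs : Fin (k+1) → ℕ),
    (∀ i, zs i ≤ zs 0) → ψ.Realize V zs → (closeBex k ψ).Realize V (fun _ => zs 0)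
  | 0, ψ, V, zs, _, h => by
    have hz : (fun _ : Fin 1 => zs 0) = zs := by
      funext i
      rw [Subsingleton.elim i 0]
    rw [hz]; exact h
  | k+1, ψ, V, zs, hb, h => by
    have hz : (Fin.snoc (zs ∘ Fin.castSucc) (zs (Fin.last (k+1))) : Fin (k+2) → ℕ) = zs := by
      funext j
      refine Fin.lastCases ?_ (fun j₀ => ?_) j <;> simp [Function.comp]
    have hmain : (∃' (leF (Term.var (Sum.inr (Fin.last (k+1))))
        (Term.var (Sum.map id Fin.castSucc (Sum.inr (0 : Fin (k+1))))) ⊓ ψ)).Realize V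
        (zs ∘ Fin.castSucc) := by
      rw [BoundedFormula.realize_ex]
      refine ⟨zs (Fin.last (k+1)), ?_⟩
      rw [BoundedFormula.realize_inf]
      refine ⟨?_, ?_⟩
      · simp only [realize_leF, Term.realize_var, Sum.elim_inr, Sum.map_inr,
          Fin.snoc_last, Fin.snoc_castSucc, Fin.castSucc_zero, relMap_le,
          Matrix.cons_val_zero, Matrix.cons_val_one, Matrix.head_cons, snoc_zero'']
        exact hb _
      · rw [hz]; exact h
    have := closeBex_complete k _ V (zs ∘ Fin.castSucc)
      (fun i => by simpa [Function.comp] using hb i.castSucc) hmain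
    simpa [Function.comp, closeBex] using this

end Final

lemma env_irrel {M : Type} [La.Structure M] {n : ℕ} {φ : La.BoundedFormula Empty n}
    {V V' : Empty → M} {xs : Fin n → M} (h : φ.Realize V xs) : φ.Realize V' xs := by
  rwa [Subsingleton.elim V' V]

/-- every Σ₁ sentence can be effectively transformed into a pure 1-Σ₁
sentence that is true in ℕ iff it is, and which logically implies it. -/
theorem statement1 :
    ∃ F : La.Sentence → La.Sentence,
      ∀ σ : La.Sentence, IsSigma1 σ →
        IsPure1Sigma1 (F σ) ∧
        ((ℕ ⊨ σ) ↔ (ℕ ⊨ F σ)) ∧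
        (∀ (M : Type) [La.Structure M] [Nonempty M], M ⊨ F σ → M ⊨ σ) := by
  have key : ∀ σ : La.Sentence, IsSigma1 σ →
      ∃ τ : La.Sentence, IsPure1Sigma1 τ ∧ ((ℕ ⊨ σ) ↔ (ℕ ⊨ τ)) ∧
        (∀ (M : Type) [La.Structure M] [Nonempty M], M ⊨ τ → M ⊨ σ) := by
    rintro σ ⟨m, δ, hδ, rfl⟩
    obtain ⟨p, q, hpp, -, hSp, -, hNp, -⟩ := mainDelta0 hδ m Fin.succ
    have hsound : ∀ (M : Type) [La.Structure M] [Nonempty M],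
        M ⊨ (closeBex m p).ex → M ⊨ BoundedFormula.exs δ := by
      intro M _ _ h
      obtain ⟨a, ha⟩ := BoundedFormula.realize_ex.1 h
      obtain ⟨zs, hzs⟩ := closeBex_sound M m p _ _ ha
      have hδr := hSp M _ zs hzs
      exact BoundedFormula.realize_exs.2 ⟨zs ∘ Fin.succ, env_irrel hδr⟩
    refine ⟨(closeBex m p).ex, ⟨closeBex m p, closeBex_pure m p hpp, rfl⟩, ⟨?_, ?_⟩, hsound⟩
    · intro hσ
      obtain ⟨v, hv⟩ := BoundedFormula.realize_exs.1 hσ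
      obtain ⟨x₀, hx₀⟩ := hNp default v (env_irrel hv)
      set b := x₀ + Finset.univ.sup v with hbdef
      have hzb : ∀ i, (Fin.cons b v : Fin (m+1) → ℕ) i ≤ (Fin.cons b v : Fin (m+1) → ℕ) 0 := by
        intro i
        refine Fin.cases ?_ (fun i₀ => ?_) i
        · exact le_refl _
        · rw [Fin.cons_succ, Fin.cons_zero]
          exact le_trans (Finset.le_sup (Finset.mem_univ i₀)) (Nat.le_add_left _ _)
      have hp : p.Realize (default : Empty → ℕ) (Fin.cons b v) := by
        apply hx₀
        · intro i; simp
        · rw [Fin.cons_zero]; exact Nat.le_add_right _ _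
      have hc := closeBex_complete m p default (Fin.cons b v) hzb hp
      rw [Fin.cons_zero] at hc
      refine BoundedFormula.realize_ex.2 ⟨b, ?_⟩
      have henv : ∀ (xs : Fin 0 → ℕ), (Fin.snoc xs b : Fin 1 → ℕ) = fun _ => b := by
        intro xs; funext i; simp [Fin.snoc]
      rw [henv]
      exact env_irrel hc
    · exact fun h => hsound ℕ h
  have key2 : ∀ σ : La.Sentence, ∃ τ : La.Sentence, IsSigma1 σ →
      IsPure1Sigma1 τ ∧ ((ℕ ⊨ σ) ↔ (ℕ ⊨ τ)) ∧
        (∀ (M : Type) [La.Structure M] [Nonempty M], M ⊨ τ → M ⊨ σ) := by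
    intro σ
    by_cases h : IsSigma1 σ
    · obtain ⟨τ, hτ⟩ := key σ h
      exact ⟨τ, fun _ => hτ⟩
    · exact ⟨σ, fun h' => absurd h' h⟩
  choose F hF using key2
  exact ⟨F, hF⟩
end

section
/- Let M be an L_a-structure, v ∈ M a certified element, and k ∈ ℕ such that M ⊨ m̄ ≠ v for all m < k. Then M ⊨ m̄ ≤ v for every m ≤ k. -/
open FirstOrder FirstOrder.Language

section Semantics
open FirstOrder.Language.Structure

variable (M : Type) [La.Structure M]

/-- The interpretation of `0` in `M`. -/
def zM : M := funMap (L := La) AFunc.zero ![]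
/-- The interpretation of successor in `M`. -/
def sM (x : M) : M := funMap (L := La) AFunc.succ ![x]
/-- The interpretation of addition in `M`. -/
def addM (x y : M) : M := funMap (L := La) AFunc.add ![x, y]
/-- The interpretation of multiplication in `M`. -/
def mulM (x y : M) : M := funMap (L := La) AFunc.mul ![x, y]
/-- The interpretation of `≤` in `M`. -/
def leM (x y : M) : Prop := RelMap (L := La) ARel.le ![x, y]
/-- `x < y` in `M`: `x ≤ y ∧ x ≠ y`. -/
def ltM (x y : M) : Prop := leM M x y ∧ x ≠ y
/-- The interpretation of the numeral `m̄` in `M`. -/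
def natM : ℕ → M
  | 0 => zM M
  | m + 1 => sM M (natM m)

/-- An element `v` of an `L_a`-structure is *certified* if it satisfies the
certification axioms A1–A10. -/
structure Certified (v : M) : Prop where
  a1 : leM M (zM M) v
  a2 : ∀ x : M, ltM M x v → leM M (sM M x) v
  a3 : ∀ x : M, leM M x (zM M) ↔ x = zM M
  a4 : ∀ x : M, ltM M x v → ∀ y : M, leM M y (sM M x) ↔ (leM M y x ∨ y = sM M x)
  a5 : ∀ x y z : M, leM M x v → leM M y v → leM M z v →
    sM M (addM M (mulM M x y) z) ≠ zM M
  a6 : ∀ x y z w : M, leM M x v → leM M y v → leM M z v → leM M w v →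
    sM M (addM M (mulM M x y) z) = sM M w → addM M (mulM M x y) z = w
  a7 : ∀ x y : M, leM M x v → leM M y v → addM M (mulM M x y) (zM M) = mulM M x y
  a8 : ∀ x y z : M, leM M x v → leM M y v → leM M z v →
    addM M (mulM M x y) (sM M z) = sM M (addM M (mulM M x y) z)
  a9 : ∀ x : M, leM M x v → mulM M x (zM M) = zM M
  a10 : ∀ x y : M, leM M x v → leM M y v → mulM M x (sM M y) = addM M (mulM M x y) x

end Semantics

theorem natM_le_of_forall_lt_ne {M : Type} [La.Structure M] {v : M} (h0 : leM M (zM M) v)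
    (hsucc : ∀ x : M, ltM M x v → leM M (sM M x) v) {k : ℕ}
    (hk : ∀ m : ℕ, m < k → natM M m ≠ v) : ∀ m : ℕ, m ≤ k → leM M (natM M m) v
  | 0, _ => h0
  | m + 1, hm =>
    hsucc _ ⟨natM_le_of_forall_lt_ne h0 hsucc hk m (Nat.le_of_succ_le hm), hk m (Nat.lt_of_succ_le hm)⟩

/-- if `v` is certified and `m̄ ≠ v` in `M` for all `m < k`,
then `m̄ ≤ v` in `M` for every `m ≤ k`. -/
theorem statement3 (M : Type) [La.Structure M] (v : M) (hv : Certified M v)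
    (k : ℕ) (hk : ∀ m : ℕ, m < k → natM M m ≠ v) :
    ∀ m : ℕ, m ≤ k → leM M (natM M m) v :=
  natM_le_of_forall_lt_ne hv.a1 hv.a2 hk
end

section
/- Let M be an L_a-structure, v ∈ M a certified element, and k ∈ ℕ such that M ⊨ m̄ ≠ v for all m < k. Then for every m ≤ k, M satisfies ∀y (y ≤ m̄ ↔ ⋁_{l ≤ m} y = l̄). -/
open FirstOrder FirstOrder.Language

namespace Certified

variable {M : Type} [La.Structure M] {v : M}

theorem natM_le (hv : Certified M v) {k : ℕ} (hk : ∀ m < k, natM M m ≠ v) :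
    ∀ m ≤ k, leM M (natM M m) v
  | 0, _ => hv.a1
  | m + 1, hm => hv.a2 _ ⟨hv.natM_le hk m (by omega), hk m hm⟩

theorem natM_lt (hv : Certified M v) {k : ℕ} (hk : ∀ m < k, natM M m ≠ v) {m : ℕ}
    (hm : m < k) : ltM M (natM M m) v :=
  ⟨hv.natM_le hk m hm.le, hk m hm⟩

theorem le_natM_iff (hv : Certified M v) {m : ℕ} (hm : ∀ l < m, ltM M (natM M l) v) (y : M) :
    leM M y (natM M m) ↔ ∃ l ≤ m, y = natM M l := by
  induction m with
  | zero => simp [natM, hv.a3]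
  | succ n ih =>
    rw [natM, hv.a4 _ (hm n n.lt_succ_self), ih fun l hl => hm l (hl.trans n.lt_succ_self)]
    constructor
    · rintro (⟨l, hl, rfl⟩ | rfl)
      exacts [⟨l, hl.trans n.le_succ, rfl⟩, ⟨n + 1, le_rfl, rfl⟩]
    · rintro ⟨l, hl, rfl⟩
      rcases hl.lt_or_eq with hl | rfl
      exacts [Or.inl ⟨l, Nat.le_of_lt_succ hl, rfl⟩, Or.inr rfl]

end Certified

/-- if `v` is certified and `m̄ ≠ v` in `M` for all `m < k`,
then for every `m ≤ k`, `M ⊨ ∀y (y ≤ m̄ ↔ ⋁_{l ≤ m} y = l̄)`. -/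
theorem statement4 (M : Type) [La.Structure M] (v : M) (hv : Certified M v)
    (k : ℕ) (hk : ∀ m : ℕ, m < k → natM M m ≠ v) :
    ∀ m : ℕ, m ≤ k → ∀ y : M, leM M y (natM M m) ↔ ∃ l : ℕ, l ≤ m ∧ y = natM M l :=
  fun _ hm => hv.le_natM_iff fun _ hl => hv.natM_lt hk (hl.trans_le hm)
end

section
/- Let M be an L_a-structure, v ∈ M a certified element, and k ∈ ℕ such that M ⊨ m̄ ≠ v for all m < k. Then for all m, n ≤ k: (1) M ⊨ m̄ × n̄ = (m·n)̄, and (2) M ⊨ m̄ + n̄ = (m+n)̄. -/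
/-!
Below a certified `v`, axioms A7–A10 are exactly the recursion equations of `x × y + z`
in `z` and of `x × y` in `y`. Since every numeral `m̄` with `m ≤ k` lies below `v`,
induction shows `(x × y) + p̄ = S^p (x × y)` and then `m̄ × n̄ = (m·n)̄`. Addition
is recovered from this through `m̄ + n̄ = (m̄ × 1̄) + n̄`
(or `0̄ + 0̄ = (0̄ × 0̄) + 0̄` when `k = 0`).
-/

open FirstOrder FirstOrder.Language

theorem natM_add (M : Type) [La.Structure M] (a p : ℕ) :
    natM M (a + p) = (sM M)^[p] (natM M a) := by
  induction p with
  | zero => rfl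
  | succ p ih => rw [Function.iterate_succ_apply', ← ih]; rfl

namespace Certified

variable {M : Type} [La.Structure M] {v : M} {k : ℕ}

theorem leM_natM (hv : Certified M v) (hk : ∀ m < k, natM M m ≠ v) {m : ℕ} (hm : m ≤ k) :
    leM M (natM M m) v := by
  induction m with
  | zero => exact hv.a1
  | succ m ih => exact hv.a2 _ ⟨ih (by omega), hk m (by omega)⟩

section
variable (hv : Certified M v) (hle : ∀ m ≤ k, leM M (natM M m) v)
include hv hle

theorem addM_mulM_natM {x y : M} (hx : leM M x v) (hy : leM M y v) {p : ℕ} (hp : p ≤ k) :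
    addM M (mulM M x y) (natM M p) = (sM M)^[p] (mulM M x y) := by
  induction p with
  | zero => exact hv.a7 x y hx hy
  | succ p ih =>
    rw [Function.iterate_succ_apply', ← ih (by omega)]
    exact hv.a8 x y _ hx hy (hle p (by omega))

theorem mulM_natM {m n : ℕ} (hm : m ≤ k) (hn : n ≤ k) :
    mulM M (natM M m) (natM M n) = natM M (m * n) := by
  induction n with
  | zero => exact hv.a9 _ (hle m hm)
  | succ n ih =>
    change mulM M (natM M m) (sM M (natM M n)) = _
    rw [hv.a10 _ _ (hle m hm) (hle n (by omega)),
      hv.addM_mulM_natM hle (hle m hm) (hle n (by omega)) hm, ih (by omega),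
      Nat.mul_succ, natM_add]

theorem addM_natM {m n : ℕ} (hm : m ≤ k) (hn : n ≤ k) :
    addM M (natM M m) (natM M n) = natM M (m + n) := by
  obtain ⟨x, y, hx, hy, hxy⟩ :
      ∃ x y, leM M x v ∧ leM M y v ∧ mulM M x y = natM M m := by
    rcases Nat.eq_zero_or_pos k with rfl | hk
    · obtain rfl : m = 0 := by omega
      exact ⟨_, _, hv.a1, hv.a1, hv.a9 _ hv.a1⟩
    · exact ⟨_, _, hle m hm, hle 1 hk, by rw [hv.mulM_natM hle hm hk, Nat.mul_one]⟩
  rw [← hxy, hv.addM_mulM_natM hle hx hy hn, hxy, natM_add]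

end

end Certified

/-- if `v` is certified and `m̄ ≠ v` in `M` for all `m < k`, then for
all `m, n ≤ k`: (1) `M ⊨ m̄ × n̄ = (m·n)̄` and (2) `M ⊨ m̄ + n̄ = (m+n)̄`. -/
theorem statement6 (M : Type) [La.Structure M] (v : M) (hv : Certified M v)
    (k : ℕ) (hk : ∀ m : ℕ, m < k → natM M m ≠ v) :
    ∀ m n : ℕ, m ≤ k → n ≤ k →
      mulM M (natM M m) (natM M n) = natM M (m * n) ∧
      addM M (natM M m) (natM M n) = natM M (m + n) := by
  have hle : ∀ m ≤ k, leM M (natM M m) v := fun m hm => hv.leM_natM hk hm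
  intro m n hm hn
  exact ⟨hv.mulM_natM hle hm hn, hv.addM_natM hle hm hn⟩
end

section
/- Let M be an L_a-structure, v ∈ M a certified element, and k ∈ ℕ such that M ⊨ m̄ ≠ v for all m < k. Suppose m ≤ k² + k, l ≤ k, and m ≠ l. Then M ⊨ m̄ ≠ l̄. -/
open FirstOrder FirstOrder.Language

/-!
Every numeral `n̄` with `n ≤ k² + k` is, provably in `M`, equal to `(k̄ × ā) + b̄` for some
`a, b ≤ k`, and all of `k̄, ā, b̄` lie below `v`. Axioms A5 and A6 therefore apply to such numerals:
`S n̄ ≠ 0` and `S n̄ = S l̄ → n̄ = l̄`. Peeling successors off both sides of `m̄ = l̄` reduces it to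
`0 = S …` or `S … = 0`, which A5 forbids.
-/

theorem Nat.exists_eq_mul_add_of_le_sq_add {k n : ℕ} (hn : n ≤ k ^ 2 + k) :
    ∃ a ≤ k, ∃ b ≤ k, n = k * a + b := by
  rcases lt_or_ge n (k * k) with h | h
  · have hk : 0 < k := Nat.pos_of_ne_zero (by rintro rfl; simp at h)
    exact ⟨n / k, (Nat.div_lt_of_lt_mul h).le, n % k, (Nat.mod_lt n hk).le,
      (Nat.div_add_mod n k).symm⟩
  · exact ⟨k, le_rfl, n - k * k, by rw [sq] at hn; omega, by omega⟩

section Certified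

variable {M : Type} [La.Structure M] {v : M} {k : ℕ}

theorem leM_natM_of_le (hv : Certified M v) (hk : ∀ m < k, natM M m ≠ v) :
    ∀ {m : ℕ}, m ≤ k → leM M (natM M m) v
  | 0, _ => hv.a1
  | m + 1, hm => hv.a2 _ ⟨leM_natM_of_le hv hk (by omega), hk m hm⟩

theorem addM_natM_of_mulM_eq_natM (hv : Certified M v) (hk : ∀ m < k, natM M m ≠ v)
    {x y : M} (hx : leM M x v) (hy : leM M y v) {n : ℕ} (hxy : mulM M x y = natM M n) :
    ∀ {c : ℕ}, c ≤ k → addM M (mulM M x y) (natM M c) = natM M (n + c)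
  | 0, _ => (hv.a7 x y hx hy).trans hxy
  | c + 1, hc => by
    rw [natM, hv.a8 x y _ hx hy (leM_natM_of_le hv hk (by omega)),
      addM_natM_of_mulM_eq_natM hv hk hx hy hxy (by omega)]
    rfl

theorem mulM_natM (hv : Certified M v) (hk : ∀ m < k, natM M m ≠ v) {a : ℕ} (ha : a ≤ k) :
    ∀ {b : ℕ}, b ≤ k → mulM M (natM M a) (natM M b) = natM M (a * b)
  | 0, _ => hv.a9 _ (leM_natM_of_le hv hk ha)
  | b + 1, hb => by
    have hb' : b ≤ k := by omega
    rw [natM, hv.a10 _ _ (leM_natM_of_le hv hk ha) (leM_natM_of_le hv hk hb'),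
      addM_natM_of_mulM_eq_natM hv hk (leM_natM_of_le hv hk ha) (leM_natM_of_le hv hk hb')
        (mulM_natM hv hk ha hb') ha, Nat.mul_succ]

theorem exists_natM_eq_addM_mulM (hv : Certified M v) (hk : ∀ m < k, natM M m ≠ v) {n : ℕ}
    (hn : n ≤ k ^ 2 + k) :
    ∃ a ≤ k, ∃ b ≤ k, natM M n = addM M (mulM M (natM M k) (natM M a)) (natM M b) := by
  obtain ⟨a, ha, b, hb, rfl⟩ := Nat.exists_eq_mul_add_of_le_sq_add hn
  refine ⟨a, ha, b, hb, ?_⟩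
  rw [addM_natM_of_mulM_eq_natM hv hk (leM_natM_of_le hv hk le_rfl) (leM_natM_of_le hv hk ha)
    (mulM_natM hv hk le_rfl ha) hb]

theorem natM_succ_ne_zM (hv : Certified M v) (hk : ∀ m < k, natM M m ≠ v) {n : ℕ}
    (hn : n ≤ k ^ 2 + k) : natM M (n + 1) ≠ zM M := by
  obtain ⟨a, ha, b, hb, hab⟩ := exists_natM_eq_addM_mulM hv hk hn
  rw [natM, hab]
  exact hv.a5 _ _ _ (leM_natM_of_le hv hk le_rfl) (leM_natM_of_le hv hk ha)
    (leM_natM_of_le hv hk hb)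

theorem natM_eq_of_natM_succ_eq (hv : Certified M v) (hk : ∀ m < k, natM M m ≠ v) {n l : ℕ}
    (hn : n ≤ k ^ 2 + k) (hl : l ≤ k) (h : natM M (n + 1) = natM M (l + 1)) :
    natM M n = natM M l := by
  obtain ⟨a, ha, b, hb, hab⟩ := exists_natM_eq_addM_mulM hv hk hn
  rw [natM, natM, hab] at h
  rw [hab]
  exact hv.a6 _ _ _ _ (leM_natM_of_le hv hk le_rfl) (leM_natM_of_le hv hk ha)
    (leM_natM_of_le hv hk hb) (leM_natM_of_le hv hk hl) h

end Certified

/-- if `v` is certified and `m̄ ≠ v` in `M` for all `m < k`, then for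
`m ≤ k² + k`, `l ≤ k` with `m ≠ l`, we have `M ⊨ m̄ ≠ l̄`. -/
theorem statement7 (M : Type) [La.Structure M] (v : M) (hv : Certified M v)
    (k : ℕ) (hk : ∀ m : ℕ, m < k → natM M m ≠ v) :
    ∀ m l : ℕ, m ≤ k ^ 2 + k → l ≤ k → m ≠ l → natM M m ≠ natM M l := by
  intro m l hm hl hne
  induction l generalizing m with
  | zero =>
    obtain ⟨n, rfl⟩ := Nat.exists_eq_succ_of_ne_zero hne
    exact natM_succ_ne_zM hv hk (by omega)
  | succ l ih =>
    rcases m with _ | n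
    · exact (natM_succ_ne_zM hv hk (by nlinarith)).symm
    · intro h
      have hn : natM M n = natM M l := natM_eq_of_natM_succ_eq hv hk (by omega) (by omega) h
      exact ih n (by omega) (by omega) (by omega) hn
end
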